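/- arXiv:1306.1433 — 11 statements merged into one kernel-verified Lean document; each statement's English description precedes it below -/
import Mathlib

section
/- Let m be a positive integer and p a real number with 1/m < p ≤ 1. If X is a random variable distributed according to the binomial distribution B(m, p), then P[X ≥ m·p] > 1/4. -/
/-!
Let `k = ⌈m p⌉ ≥ 2`. The tail `P[B(m, p) ≥ k]` is strictly increasing in `p` and `p > (k - 1) / m`,
so it suffices to show `P[B(m, (k - 1) / m) ≥ k] ≥ 1/4`. This is nondecreasing in `m ≥ k`, and at
`m = k` it equals `(1 - 1/k)^k ≥ 1/4`. For the monotonicity in `m`, let `r = (k - 1 - t) / m` and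
interpolate with
`g t = P[B(m, r) ≥ k] + t P[B(m, r) = k - 1] = (1 - t) P[B(m, r) ≥ k] + t P[B(m, r) ≥ k - 1]`.
At `t = 0` this is the value for `m` trials; at `t = (k - 1) / (m + 1)`, a fixed point of `t ↦ r`,
Pascal's rule turns it into the value for `m + 1` trials. In between
`g' = (r - t) (P[B(m - 1, r) = k - 2] - P[B(m - 1, r) = k - 1])`, which is nonnegative because
`t ≤ r` and the binomial distribution decreases beyond its mean.
-/

open Finset

noncomputable def binomTerm (m j : ℕ) (p : ℝ) : ℝ :=
  (m.choose j : ℝ) * p ^ j * (1 - p) ^ (m - j)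

noncomputable def binomTail (m k : ℕ) (p : ℝ) : ℝ :=
  ∑ j ∈ Icc k m, binomTerm m j p

theorem binomTerm_eq_zero_of_lt {m j : ℕ} (h : m < j) (p : ℝ) : binomTerm m j p = 0 := by
  simp [binomTerm, Nat.choose_eq_zero_of_lt h]

theorem binomTerm_pos {m j : ℕ} (h : j ≤ m) {p : ℝ} (hp₀ : 0 < p) (hp₁ : p < 1) :
    0 < binomTerm m j p := by
  have := sub_pos.mpr hp₁
  have := Nat.choose_pos h
  unfold binomTerm
  positivity

theorem binomTerm_succ_succ (n j : ℕ) (p : ℝ) :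
    binomTerm (n + 1) (j + 1) p = (1 - p) * binomTerm n (j + 1) p + p * binomTerm n j p := by
  rcases lt_or_ge j n with h | h
  · obtain ⟨e, rfl⟩ := Nat.exists_eq_add_of_lt h
    simp only [binomTerm, Nat.choose_succ_succ', Nat.cast_add,
      show j + e + 1 + 1 - (j + 1) = e + 1 by omega, show j + e + 1 - (j + 1) = e by omega,
      show j + e + 1 - j = e + 1 by omega]
    ring
  · simp only [binomTerm, Nat.choose_succ_succ', Nat.choose_eq_zero_of_lt (Nat.lt_succ_of_le h),
      Nat.cast_add, Nat.add_sub_add_right]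
    ring

theorem hasDerivAt_binomTerm_succ (n j : ℕ) (x : ℝ) :
    HasDerivAt (binomTerm (n + 1) (j + 1))
      ((n + 1) * (binomTerm n j x - binomTerm n (j + 1) x)) x := by
  have eval_eq : ∀ m i y, (bernsteinPolynomial ℝ m i).eval y = binomTerm m i y := by
    simp [bernsteinPolynomial, binomTerm]
  have h := (bernsteinPolynomial ℝ (n + 1) (j + 1)).hasDerivAt x
  simp only [bernsteinPolynomial.derivative_succ, eval_eq, Polynomial.eval_mul,
    Polynomial.eval_sub, Polynomial.eval_natCast, Nat.add_sub_cancel] at h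
  push_cast at h
  convert h using 1

theorem binomTail_succ_succ_eq_sum (n k : ℕ) (p : ℝ) :
    binomTail (n + 1) (k + 1) p = ∑ i ∈ Icc k n, binomTerm (n + 1) (i + 1) p := by
  rw [binomTail, ← map_add_right_Icc, sum_map]
  rfl

theorem binomTail_self (m : ℕ) (p : ℝ) : binomTail m m p = p ^ m := by
  simp [binomTail, binomTerm]

theorem binomTail_eq_binomTerm_add (m k : ℕ) (p : ℝ) :
    binomTail m k p = binomTerm m k p + binomTail m (k + 1) p := by
  rcases le_or_gt k m with h | h
  · rw [binomTail, ← insert_Icc_add_one_left_eq_Icc h, sum_insert (by simp), binomTail]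
  · simp [binomTail, binomTerm_eq_zero_of_lt h, Icc_eq_empty_of_lt h,
      Icc_eq_empty_of_lt (h.trans (Nat.lt_succ_self k))]

theorem binomTail_succ_succ (n k : ℕ) (p : ℝ) :
    binomTail (n + 1) (k + 1) p = (1 - p) * binomTail n (k + 1) p + p * binomTail n k p := by
  have shift : ∑ i ∈ Icc k n, binomTerm n (i + 1) p = binomTail n (k + 1) p := by
    calc ∑ i ∈ Icc k n, binomTerm n (i + 1) p = ∑ j ∈ Icc (k + 1) (n + 1), binomTerm n j p := by
          rw [← map_add_right_Icc, sum_map]; rfl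
      _ = binomTail n (k + 1) p := by
          refine (sum_subset (Icc_subset_Icc_right n.le_succ) fun j hj hjn => ?_).symm
          simp only [mem_Icc] at hj hjn
          exact binomTerm_eq_zero_of_lt (by omega) p
  simp only [binomTail_succ_succ_eq_sum, binomTerm_succ_succ, sum_add_distrib, ← mul_sum, shift]
  rfl

theorem hasDerivAt_binomTail (n k : ℕ) (x : ℝ) :
    HasDerivAt (binomTail (n + 1) (k + 1)) ((n + 1) * binomTerm n k x) x := by
  have h := HasDerivAt.fun_sum (u := Icc k n) fun i _ => hasDerivAt_binomTerm_succ n i x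
  have telescope : ∑ i ∈ Icc k n, (binomTerm n i x - binomTerm n (i + 1) x) = binomTerm n k x := by
    rcases le_or_gt k n with hkn | hkn
    · have := sum_Icc_sub hkn (binomTerm n · x)
      rw [binomTerm_eq_zero_of_lt n.lt_succ_self] at this
      rw [sum_sub_distrib] at this ⊢
      linarith
    · simp [Icc_eq_empty_of_lt hkn, binomTerm_eq_zero_of_lt hkn]
  rw [← mul_sum, telescope] at h
  rwa [show binomTail (n + 1) (k + 1) = _ from funext (binomTail_succ_succ_eq_sum n k)]

theorem strictMonoOn_binomTail {m k : ℕ} (hk : 1 ≤ k) (hkm : k ≤ m) :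
    StrictMonoOn (binomTail m k) (Set.Icc 0 1) := by
  obtain ⟨j, rfl⟩ := Nat.exists_eq_add_of_le' hk
  obtain ⟨n, rfl⟩ := Nat.exists_eq_add_of_le' (hk.trans hkm)
  refine strictMonoOn_of_deriv_pos (convex_Icc 0 1)
    (fun x _ => (hasDerivAt_binomTail n j x).continuousAt.continuousWithinAt) fun x hx => ?_
  rw [interior_Icc] at hx
  rw [(hasDerivAt_binomTail n j x).deriv]
  exact mul_pos (by positivity) (binomTerm_pos (by omega) hx.1 hx.2)

theorem binomTerm_succ_le {n j : ℕ} {p : ℝ} (hp : 0 ≤ p) (hpj : (n + 1) * p ≤ j + 1) :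
    binomTerm n (j + 1) p ≤ binomTerm n j p := by
  rcases lt_or_ge j n with h | h
  · obtain ⟨e, rfl⟩ := Nat.exists_eq_add_of_lt h
    have ratio : ((j + e + 1).choose (j + 1) : ℝ) * (j + 1) = ((j + e + 1).choose j) * (e + 1) := by
      have := Nat.choose_succ_right_eq (j + e + 1) j
      rw [show j + e + 1 - j = e + 1 by omega] at this
      exact_mod_cast this
    simp only [binomTerm, show j + e + 1 - (j + 1) = e by omega, show j + e + 1 - j = e + 1 by omega]
    push_cast at hpj
    have h1p : 0 ≤ 1 - p := by nlinarith
    have key : ((j + e + 1).choose (j + 1) : ℝ) * p ≤ ((j + e + 1).choose j) * (1 - p) := by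
      refine le_of_mul_le_mul_right ?_ (by positivity : (0 : ℝ) < j + 1)
      rw [mul_right_comm, ratio]
      nlinarith
    calc ((j + e + 1).choose (j + 1) : ℝ) * p ^ (j + 1) * (1 - p) ^ e
        = ((j + e + 1).choose (j + 1) * p) * (p ^ j * (1 - p) ^ e) := by ring
      _ ≤ ((j + e + 1).choose j * (1 - p)) * (p ^ j * (1 - p) ^ e) := by gcongr
      _ = (j + e + 1).choose j * p ^ j * (1 - p) ^ (e + 1) := by ring
  · rw [binomTerm_eq_zero_of_lt (Nat.lt_succ_of_le h)]
    rcases h.lt_or_eq with h | rfl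
    · rw [binomTerm_eq_zero_of_lt h]
    · simp only [binomTerm, Nat.choose_self, Nat.sub_self]
      positivity

theorem binomTail_le_binomTail_succ (n j : ℕ) :
    binomTail (n + 1) (j + 2) ((j + 1) / (n + 1)) ≤
      binomTail (n + 2) (j + 2) ((j + 1) / (n + 2)) := by
  set r : ℝ → ℝ := fun t => (j + 1 - t) / (n + 1) with hr
  set g : ℝ → ℝ := fun t => binomTail (n + 1) (j + 2) (r t) + t * binomTerm (n + 1) (j + 1) (r t)
  set t₀ : ℝ := (j + 1) / (n + 2) with ht₀
  have hg : ∀ t, HasDerivAt g ((r t - t) * (binomTerm n j (r t) - binomTerm n (j + 1) (r t))) t := by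
    intro t
    have hr' : HasDerivAt r (-1 / (n + 1)) t := by
      simpa using ((hasDerivAt_id t).const_sub ((j : ℝ) + 1)).div_const ((n : ℝ) + 1)
    refine (((hasDerivAt_binomTail n (j + 1) (r t)).comp t hr').add
      ((hasDerivAt_id t).mul ((hasDerivAt_binomTerm_succ n j (r t)).comp t hr'))).congr_deriv ?_
    simp only [Function.comp_apply, id, binomTerm_succ_succ]
    field_simp
    ring
  have hmono : MonotoneOn g (Set.Icc 0 t₀) := by
    refine monotoneOn_of_deriv_nonneg (convex_Icc 0 t₀)
      (fun t _ => (hg t).continuousAt.continuousWithinAt)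
      (fun t _ => (hg t).differentiableAt.differentiableWithinAt) fun t ht => ?_
    rw [interior_Icc] at ht
    obtain ⟨ht_pos, ht_lt⟩ := ht
    rw [(hg t).deriv]
    have hrt : t ≤ r t := by
      rw [ht₀, lt_div_iff₀ (by positivity)] at ht_lt
      rw [hr, le_div_iff₀ (by positivity)]
      nlinarith
    refine mul_nonneg (by linarith) (sub_nonneg.mpr (binomTerm_succ_le (by linarith) ?_))
    rw [hr, mul_div_cancel₀ _ (by positivity)]
    linarith
  have ht₀_nonneg : 0 ≤ t₀ := by positivity
  have hrt₀ : r t₀ = t₀ := by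
    rw [hr, ht₀]; field_simp; ring
  calc binomTail (n + 1) (j + 2) ((j + 1) / (n + 1)) = g 0 := by simp [g, hr]
    _ ≤ g t₀ := hmono ⟨le_rfl, ht₀_nonneg⟩ ⟨ht₀_nonneg, le_rfl⟩ ht₀_nonneg
    _ = binomTail (n + 2) (j + 2) t₀ := by
      simp only [g, hrt₀]
      rw [binomTail_succ_succ (n + 1) (j + 1), binomTail_eq_binomTerm_add (n + 1) (j + 1)]
      ring

theorem pow_le_binomTail_of_le {j n : ℕ} (h : j + 1 ≤ n) :
    (((j : ℝ) + 1) / (j + 2)) ^ (j + 2) ≤ binomTail (n + 1) (j + 2) ((j + 1) / (n + 1)) := by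
  induction n, h using Nat.le_induction with
  | base =>
    rw [show j + 1 + 1 = j + 2 from rfl, binomTail_self]
    push_cast
    exact le_of_eq (by ring)
  | succ n _ ih =>
    refine ih.trans ((binomTail_le_binomTail_succ n j).trans_eq ?_)
    push_cast
    ring_nf

theorem quarter_le_div_pow (j : ℕ) : (1 : ℝ) / 4 ≤ (((j : ℝ) + 1) / (j + 2)) ^ (j + 2) := by
  rcases j with _ | _ | i
  · norm_num
  · norm_num
  set x : ℝ := ((i + 3 : ℕ) : ℝ)⁻¹ with hx
  have hx₀ : 0 < x := by positivity
  have hx₃ : x ≤ 1 / 3 := by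
    rw [hx, inv_eq_one_div]; gcongr; push_cast; linarith [(i.cast_nonneg : (0 : ℝ) ≤ i)]
  have hpow : (1 + x) ^ (i + 3 + 1) < 4 := calc
    (1 + x) ^ (i + 3 + 1) = (1 + x) ^ (i + 3) * (1 + x) := pow_succ _ _
    _ ≤ Real.exp 1 * (4 / 3) := by gcongr; exact Real.one_add_inv_pow_le_exp; linarith
    _ < 4 := by linarith [Real.exp_one_lt_d9]
  have hbase : ((((i + 1 + 1 : ℕ) : ℝ) + 1) / ((i + 1 + 1 : ℕ) + 2)) = (1 + x)⁻¹ := by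
    rw [hx]; push_cast; field_simp; ring
  rw [hbase, inv_pow, one_div]
  exact inv_anti₀ (by positivity) hpow.le

/-- For a binomial random variable `X ~ B(m, p)` with `1/m < p ≤ 1`,
the probability that `X` is at least its expected value `m·p` exceeds `1/4`. -/
theorem binomial_ge_mean_gt_quarter (m : ℕ) (hm : 0 < m) (p : ℝ)
    (hp₁ : 1 / (m : ℝ) < p) (hp₂ : p ≤ 1) :
    (1 : ℝ) / 4 <
      ∑ j ∈ Finset.Icc ⌈(m : ℝ) * p⌉₊ m,
        (m.choose j : ℝ) * p ^ j * (1 - p) ^ (m - j) := by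
  change 1 / 4 < binomTail m ⌈(m : ℝ) * p⌉₊ p
  have hm' : (0 : ℝ) < m := by exact_mod_cast hm
  have hmp : 1 < (m : ℝ) * p := by rwa [div_lt_iff₀ hm', mul_comm] at hp₁
  obtain ⟨k, hk⟩ : ∃ k, ⌈(m : ℝ) * p⌉₊ = k := ⟨_, rfl⟩
  have hk₂ : 2 ≤ k := hk ▸ Nat.lt_ceil.mpr (by exact_mod_cast hmp)
  have hkm : k ≤ m := hk ▸ Nat.ceil_le.mpr (by nlinarith)
  have hkp : (k : ℝ) < m * p + 1 := hk ▸ Nat.ceil_lt_add_one (by positivity)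
  rw [hk]
  obtain ⟨j, rfl⟩ := Nat.exists_eq_add_of_le' hk₂
  obtain ⟨n, rfl⟩ := Nat.exists_eq_add_of_le' hm
  push_cast at hkp hm'
  have hmean : ((j : ℝ) + 1) / (n + 1) < p := by rw [div_lt_iff₀ hm']; linarith
  have hmean₀ : (0 : ℝ) ≤ ((j : ℝ) + 1) / (n + 1) := by positivity
  calc (1 : ℝ) / 4 ≤ (((j : ℝ) + 1) / (j + 2)) ^ (j + 2) := quarter_le_div_pow j
    _ ≤ binomTail (n + 1) (j + 2) ((j + 1) / (n + 1)) := pow_le_binomTail_of_le (by omega)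
    _ < binomTail (n + 1) (j + 2) p :=
      strictMonoOn_binomTail (by omega) hkm ⟨hmean₀, hmean.le.trans hp₂⟩
        ⟨hmean₀.trans hmean.le, hp₂⟩ hmean
end

section
/- Let m be a positive integer and p a probability with 0 ≤ p < 1 − 1/m. If X is a random variable distributed according to the binomial distribution B(m, p), then P[X ≤ m·p] > 1/4. -/
/-!
Write `F_m(q) = P[B(m, q) ≤ k]` for `k = ⌊m p⌋`; the hypothesis on `p` gives `k + 2 ≤ m`.
Since `F_m' = -m · b_{m-1,k}` (a Bernstein polynomial), `F_m` is strictly decreasing on `[0, 1]`,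
and `p < (k + 1) / m`, so it suffices that `F_m((k + 1) / m) ≥ 1 / 4` for every `m ≥ k + 2`.

For `m = k + 2` and `q = (k + 1) / (k + 2)` this reads `q^(k+1) (1 + q) ≤ 3 / 4`, which follows
from the binomial expansion of `(1 + 1 / (k + 1))^(k + 1)` up to its cubic term. The sequence
`F_m((k + 1) / m)` is nondecreasing in `m`. Put `a = (k + 1) / (m + 1) < b = (k + 1) / m`.
Adding a trial costs `F_m(a) - F_{m+1}(a) = a · b_{m,k}(a)`, while lowering the parameter from
`b` to `a` gains `F_m(a) - F_m(b) = (b - a) · m · b_{m-1,k}(ξ)` for some `ξ ∈ (a, b)`. Since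
`ξ^k (1 - ξ)^(m-1-k)` is log-concave, the gain need only be compared with the cost at `ξ = a`
and at `ξ = b`: the first is a direct computation, the second is the monotonicity of
`(1 + 1 / n)^n`.
-/

open Finset Polynomial

section Algebra

variable (R : Type*) [CommRing R]

noncomputable def binomialCDF (m k : ℕ) : R[X] :=
  ∑ j ∈ range (k + 1), bernsteinPolynomial R m j

theorem bernsteinPolynomial_succ_succ (m k : ℕ) :
    bernsteinPolynomial R (m + 1) (k + 1) =
      X * bernsteinPolynomial R m k + (1 - X) * bernsteinPolynomial R m (k + 1) := by
  rcases lt_or_ge k m with hkm | hmk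
  · obtain ⟨d, rfl⟩ := Nat.exists_eq_add_of_lt hkm
    simp only [bernsteinPolynomial, Nat.choose_succ_succ', Nat.cast_add,
      show k + d + 1 + 1 - (k + 1) = d + 1 by omega, show k + d + 1 - k = d + 1 by omega,
      show k + d + 1 - (k + 1) = d by omega]
    ring
  · rcases hmk.eq_or_lt with rfl | hmk
    · simp [bernsteinPolynomial, pow_succ]
      ring
    · simp [bernsteinPolynomial.eq_zero_of_lt, hmk, Nat.lt_succ_of_lt hmk]

theorem binomialCDF_succ (m k : ℕ) :
    binomialCDF R (m + 1) k = binomialCDF R m k - X * bernsteinPolynomial R m k := by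
  induction k with
  | zero => simp [binomialCDF, bernsteinPolynomial, pow_succ]; ring
  | succ k ih =>
    simp only [binomialCDF, sum_range_succ] at ih ⊢
    linear_combination ih + bernsteinPolynomial_succ_succ R m k

theorem derivative_binomialCDF (m k : ℕ) :
    derivative (binomialCDF R m k) = -(m * bernsteinPolynomial R (m - 1) k) := by
  induction k with
  | zero => simp [binomialCDF, bernsteinPolynomial.derivative_zero]
  | succ k ih =>
    rw [binomialCDF, sum_range_succ, derivative_add, ← binomialCDF, ih,
      bernsteinPolynomial.derivative_succ]
    ring

theorem binomialCDF_add_two_self (k : ℕ) :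
    binomialCDF R (k + 2) k =
      1 - bernsteinPolynomial R (k + 2) (k + 1) - bernsteinPolynomial R (k + 2) (k + 2) := by
  rw [← bernsteinPolynomial.sum R (k + 2), sum_range_succ, sum_range_succ, binomialCDF]
  ring

theorem eval_binomialCDF (m k : ℕ) (q : R) :
    (binomialCDF R m k).eval q =
      ∑ j ∈ range (k + 1), (m.choose j : R) * q ^ j * (1 - q) ^ (m - j) := by
  simp [binomialCDF, eval_finsetSum, bernsteinPolynomial]

end Algebra

theorem strictAntiOn_eval_binomialCDF {m k : ℕ} (hk : k < m) :
    StrictAntiOn (fun q => (binomialCDF ℝ m k).eval q) (Set.Icc 0 1) := by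
  refine strictAntiOn_of_deriv_neg (convex_Icc 0 1) (Polynomial.continuousOn _) fun x hx => ?_
  obtain ⟨hx₀, hx₁⟩ : 0 < x ∧ x < 1 := by rwa [interior_Icc] at hx
  have hchoose : 0 < (m - 1).choose k := Nat.choose_pos (by omega)
  have hm : (0 : ℝ) < m := by exact_mod_cast hk.pos
  have hx₁' : 0 < 1 - x := by linarith
  rw [Polynomial.deriv, derivative_binomialCDF]
  simp only [bernsteinPolynomial, eval_neg, eval_mul, eval_natCast, eval_pow, eval_X, eval_sub,
    eval_one, neg_lt_zero]
  positivity

theorem min_le_rpow_mul_rpow {u v a b : ℝ} (hu : 0 ≤ u) (hv : 0 ≤ v) (ha : 0 ≤ a)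
    (hb : 0 ≤ b) (hab : a + b = 1) : min u v ≤ u ^ a * v ^ b :=
  calc min u v = min u v ^ a * min u v ^ b := by
        rw [← Real.rpow_add' (le_min hu hv) (by rw [hab]; exact one_ne_zero), hab, Real.rpow_one]
    _ ≤ u ^ a * v ^ b :=
        mul_le_mul (Real.rpow_le_rpow (le_min hu hv) (min_le_left u v) ha)
          (Real.rpow_le_rpow (le_min hu hv) (min_le_right u v) hb) (by positivity) (by positivity)

theorem quasiconcaveOn_pow_mul_one_sub_pow (s t : ℕ) :
    QuasiconcaveOn ℝ (Set.Icc 0 1) fun x : ℝ => x ^ s * (1 - x) ^ t := by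
  refine quasiconcaveOn_iff_min_le.2 ⟨convex_Icc 0 1, fun x hx y hy a b ha hb hab => ?_⟩
  obtain ⟨hx₀, hx₁⟩ := hx
  obtain ⟨hy₀, hy₁⟩ := hy
  have hx₁' : 0 ≤ 1 - x := sub_nonneg.2 hx₁
  have hy₁' : 0 ≤ 1 - y := sub_nonneg.2 hy₁
  calc min (x ^ s * (1 - x) ^ t) (y ^ s * (1 - y) ^ t)
      ≤ (x ^ s * (1 - x) ^ t) ^ a * (y ^ s * (1 - y) ^ t) ^ b :=
        min_le_rpow_mul_rpow (by positivity) (by positivity) ha hb hab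
    _ = (x ^ a * y ^ b) ^ s * ((1 - x) ^ a * (1 - y) ^ b) ^ t := by
        rw [Real.mul_rpow (by positivity) (by positivity),
          Real.mul_rpow (by positivity) (by positivity), mul_pow, mul_pow,
          Real.rpow_pow_comm hx₀, Real.rpow_pow_comm hy₀, Real.rpow_pow_comm hx₁',
          Real.rpow_pow_comm hy₁']
        ring
    _ ≤ (a * x + b * y) ^ s * (a * (1 - x) + b * (1 - y)) ^ t := by
        gcongr
        · exact Real.geom_mean_le_arith_mean2_weighted ha hb hx₀ hy₀ hab
        · exact Real.geom_mean_le_arith_mean2_weighted ha hb hx₁' hy₁' hab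
    _ = (a • x + b • y) ^ s * (1 - (a • x + b • y)) ^ t := by
        rw [smul_eq_mul, smul_eq_mul]
        congr 2
        linear_combination hab

theorem one_add_inv_pow_le_one_add_inv_pow_succ (n : ℕ) :
    (1 + (n : ℝ)⁻¹) ^ n ≤ (1 + ((n + 1 : ℕ) : ℝ)⁻¹) ^ (n + 1) := by
  rcases Nat.eq_zero_or_pos n with rfl | hn
  · norm_num
  have hn : (1 : ℝ) ≤ n := by exact_mod_cast hn
  push_cast
  set u : ℝ := 1 + (n : ℝ)⁻¹
  set v : ℝ := 1 + ((n : ℝ) + 1)⁻¹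
  set w : ℝ := 1 - ((n : ℝ) + 1)⁻¹
  have huw : u * w = 1 := by simp only [u, w]; field_simp; ring
  have bernoulli : w ≤ (w * v) ^ (n + 1) := by
    set a : ℝ := -(((n : ℝ) + 1) ^ 2)⁻¹
    have ha : -2 ≤ a := by
      have : (((n : ℝ) + 1) ^ 2)⁻¹ ≤ 1 := inv_le_one_of_one_le₀ (by nlinarith)
      linarith
    calc w = 1 + ((n + 1 : ℕ) : ℝ) * a := by simp only [w, a]; push_cast; field_simp; ring
      _ ≤ (1 + a) ^ (n + 1) := one_add_mul_le_pow ha (n + 1)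
      _ = (w * v) ^ (n + 1) := by simp only [w, v, a]; field_simp; ring
  have hu : 0 ≤ u := by positivity
  calc u ^ n = u ^ (n + 1) * w := by rw [pow_succ, mul_assoc, huw, mul_one]
    _ ≤ u ^ (n + 1) * (w * v) ^ (n + 1) := by gcongr
    _ = v ^ (n + 1) := by rw [← mul_pow, ← mul_assoc, huw, one_mul]

theorem monotone_one_add_inv_pow : Monotone fun n : ℕ => (1 + (n : ℝ)⁻¹) ^ n :=
  monotone_nat_of_le_succ one_add_inv_pow_le_one_add_inv_pow_succ

theorem one_add_mul_add_sq_add_cube_le_pow {x : ℝ} (hx : 0 ≤ x) (n : ℕ) :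
    1 + n * x + n * (n - 1) / 2 * x ^ 2 + n * (n - 1) * (n - 2) / 6 * x ^ 3 ≤ (1 + x) ^ n := by
  induction n with
  | zero => simp
  | succ n ih =>
    have hn : (0 : ℝ) ≤ n * (n - 1) * (n - 2) := by
      rcases n with _ | _ | n
      · simp
      · simp
      · push_cast; ring_nf; positivity
    calc _ ≤ (1 + x) *
          (1 + n * x + n * (n - 1) / 2 * x ^ 2 + n * (n - 1) * (n - 2) / 6 * x ^ 3) := by
          push_cast; nlinarith [pow_nonneg hx 4]
      _ ≤ (1 + x) * (1 + x) ^ n := mul_le_mul_of_nonneg_left ih (by linarith)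
      _ = (1 + x) ^ (n + 1) := (pow_succ' _ _).symm

theorem quarter_le_eval_binomialCDF_add_two (k : ℕ) :
    1 / 4 ≤ (binomialCDF ℝ (k + 2) k).eval (((k : ℝ) + 1) / (k + 2)) := by
  have hk : (0 : ℝ) ≤ k := k.cast_nonneg
  set E : ℝ := (1 + ((k : ℝ) + 1)⁻¹) ^ (k + 1)
  have hE : 2 + k / (2 * (k + 1)) + k * (k - 1) / (6 * (k + 1) ^ 2) ≤ E := by
    convert one_add_mul_add_sq_add_cube_le_pow (x := ((k : ℝ) + 1)⁻¹) (by positivity) (k + 1)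
      using 1
    push_cast
    field_simp
    ring
  set q : ℝ := ((k : ℝ) + 1) / (k + 2) with hq
  have hqE : q ^ (k + 1) = E⁻¹ := by
    rw [← inv_pow, hq]
    congr 1
    field_simp
    ring
  have hE4 : 4 * (1 + q) ≤ 3 * E := by
    refine le_trans ?_ (mul_le_mul_of_nonneg_left hE (by norm_num))
    rw [hq]
    field_simp
    nlinarith [sq_nonneg (k : ℝ), mul_nonneg hk (sq_nonneg (k : ℝ))]
  have hEpos : 0 < E := by positivity
  rw [binomialCDF_add_two_self]
  simp only [bernsteinPolynomial, Nat.choose_succ_self_right, Nat.choose_self, eval_sub, eval_one,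
    eval_mul, eval_natCast, eval_pow, eval_X, Nat.cast_one, one_mul, Nat.sub_self, pow_zero,
    mul_one, show k + 2 - (k + 1) = 1 by omega, pow_one]
  have h1q : (k + 2 : ℕ) * (1 - q) = 1 := by rw [hq]; push_cast; field_simp; ring
  rw [mul_right_comm, h1q, one_mul, show k + 2 = k + 1 + 1 from rfl, pow_succ q (k + 1), hqE]
  rw [← sub_nonneg] at hE4 ⊢
  have : 1 - E⁻¹ - E⁻¹ * q - 1 / 4 = (3 * E - 4 * (1 + q)) / (4 * E) := by field_simp; ring
  rw [this]
  positivity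

theorem pow_succ_mul_one_sub_pow_succ_le_left {k n : ℕ} {a b : ℝ}
    (ha : a = (k + 1) / (k + n + 2)) (hb : b = (k + 1) / (k + n + 1)) :
    a ^ (k + 1) * (1 - a) ^ (n + 1) ≤ (b - a) * (n + 1) * (a ^ k * (1 - a) ^ n) := by
  have hk : (0 : ℝ) ≤ k := k.cast_nonneg
  have hn : (0 : ℝ) ≤ n := n.cast_nonneg
  have ha₀ : 0 ≤ a := by rw [ha]; positivity
  have ha₁ : 0 ≤ 1 - a := by rw [ha, sub_nonneg, div_le_one (by positivity)]; linarith
  have hgap : (b - a) * (n + 1) - a * (1 - a) =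
      (k + 1) * (n + 1) / ((k + n + 1) * (k + n + 2) ^ 2) := by
    rw [ha, hb]; field_simp; ring
  have h : a * (1 - a) ≤ (b - a) * (n + 1) := by
    rw [← sub_nonneg, hgap]; positivity
  calc a ^ (k + 1) * (1 - a) ^ (n + 1) = a * (1 - a) * (a ^ k * (1 - a) ^ n) := by ring
    _ ≤ (b - a) * (n + 1) * (a ^ k * (1 - a) ^ n) :=
      mul_le_mul_of_nonneg_right h (by positivity)

theorem pow_succ_mul_one_sub_pow_succ_le_right {k n : ℕ} (hn : 0 < n) {a b : ℝ}
    (ha : a = (k + 1) / (k + n + 2)) (hb : b = (k + 1) / (k + n + 1)) :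
    a ^ (k + 1) * (1 - a) ^ (n + 1) ≤ (b - a) * (n + 1) * (b ^ k * (1 - b) ^ n) := by
  set N : ℝ := k + n + 1
  have hn' : (0 : ℝ) < n := by exact_mod_cast hn
  have hNpos : 0 < N := by positivity
  have ha' : a = (k + 1) / (N + 1) := by rw [ha]; ring
  have h1a : 1 - a = (n + 1) / (N + 1) := by rw [ha']; field_simp; ring
  have h1b : 1 - b = n / N := by rw [hb]; field_simp; ring
  have hba : b - a = (k + 1) / (N * (N + 1)) := by rw [ha', hb]; field_simp; ring
  have hmono : ((n : ℝ) + 1) ^ n / (N + 1) ^ (k + n + 1) ≤ (n : ℝ) ^ n / N ^ (k + n + 1) := by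
    have h := monotone_one_add_inv_pow (show n ≤ k + n + 1 by omega)
    simp only [show ((k + n + 1 : ℕ) : ℝ) = N by push_cast; ring] at h
    rw [inv_eq_one_div, inv_eq_one_div, one_add_div hn'.ne', one_add_div hNpos.ne', div_pow,
      div_pow, div_le_div_iff₀ (by positivity) (by positivity)] at h
    rw [div_le_div_iff₀ (by positivity) (by positivity)]
    linarith
  calc a ^ (k + 1) * (1 - a) ^ (n + 1)
      = (k + 1) ^ (k + 1) * (n + 1) / (N + 1) * ((n + 1) ^ n / (N + 1) ^ (k + n + 1)) := by
        rw [h1a, ha', div_pow, div_pow]; field_simp; ring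
    _ ≤ (k + 1) ^ (k + 1) * (n + 1) / (N + 1) * (n ^ n / N ^ (k + n + 1)) := by gcongr
    _ = (b - a) * (n + 1) * (b ^ k * (1 - b) ^ n) := by
        rw [hba, h1b, hb, div_pow, div_pow]; field_simp; ring

theorem pow_succ_mul_one_sub_pow_succ_le {k n : ℕ} (hn : 0 < n) {a b ξ : ℝ}
    (ha : a = (k + 1) / (k + n + 2)) (hb : b = (k + 1) / (k + n + 1))
    (hξ : ξ ∈ Set.Icc a b) :
    a ^ (k + 1) * (1 - a) ^ (n + 1) ≤ (b - a) * (n + 1) * (ξ ^ k * (1 - ξ) ^ n) := by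
  have ha₀ : 0 ≤ a := by rw [ha]; positivity
  have hb₁ : b ≤ 1 := by
    rw [hb, div_le_one (by positivity)]; linarith [n.cast_nonneg (α := ℝ)]
  have hmin : min (a ^ k * (1 - a) ^ n) (b ^ k * (1 - b) ^ n) ≤ ξ ^ k * (1 - ξ) ^ n :=
    ((convex_iff_ordConnected.1 (quasiconcaveOn_pow_mul_one_sub_pow k n _)).out
      ⟨⟨ha₀, hξ.1.trans (hξ.2.trans hb₁)⟩, min_le_left _ _⟩
      ⟨⟨ha₀.trans (hξ.1.trans hξ.2), hb₁⟩, min_le_right _ _⟩ hξ).2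
  have hba : 0 ≤ (b - a) * (n + 1) := mul_nonneg (sub_nonneg.2 (hξ.1.trans hξ.2)) (by positivity)
  calc a ^ (k + 1) * (1 - a) ^ (n + 1)
      ≤ (b - a) * (n + 1) * min (a ^ k * (1 - a) ^ n) (b ^ k * (1 - b) ^ n) := by
        rw [mul_min_of_nonneg _ _ hba]
        exact le_min (pow_succ_mul_one_sub_pow_succ_le_left ha hb)
          (pow_succ_mul_one_sub_pow_succ_le_right hn ha hb)
    _ ≤ (b - a) * (n + 1) * (ξ ^ k * (1 - ξ) ^ n) := by gcongr

theorem eval_binomialCDF_le_eval_binomialCDF_succ {k m : ℕ} (hkm : k + 2 ≤ m) :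
    (binomialCDF ℝ m k).eval (((k : ℝ) + 1) / m) ≤
      (binomialCDF ℝ (m + 1) k).eval (((k : ℝ) + 1) / (m + 1 : ℕ)) := by
  obtain ⟨n, rfl⟩ : ∃ n, m = k + n + 1 := ⟨m - k - 1, by omega⟩
  set F := binomialCDF ℝ (k + n + 1) k
  set a : ℝ := (k + 1) / (k + n + 2) with ha
  set b : ℝ := (k + 1) / (k + n + 1) with hb
  have hab : a < b := by rw [ha, hb]; gcongr; linarith
  obtain ⟨ξ, hξ, hslope⟩ := exists_hasDerivAt_eq_slope (fun x => F.eval x)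
    (fun x => F.derivative.eval x) hab F.continuous.continuousOn (fun x _ => F.hasDerivAt x)
  have hchoose :
      ((k + n + 1 : ℕ) : ℝ) * (k + n).choose k = (k + n + 1).choose k * (n + 1) := by
    rw [mul_comm]
    exact_mod_cast (Nat.choose_mul_succ_eq (k + n) k).trans (by congr 1; omega)
  have hdecr : a * (bernsteinPolynomial ℝ (k + n + 1) k).eval a ≤
      (b - a) * ((k + n + 1 : ℕ) * (bernsteinPolynomial ℝ (k + n) k).eval ξ) := by
    simp only [bernsteinPolynomial, eval_mul, eval_natCast, eval_pow, eval_sub, eval_one, eval_X,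
      show k + n + 1 - k = n + 1 by omega, show k + n - k = n by omega]
    have := pow_succ_mul_one_sub_pow_succ_le (by omega) ha hb ⟨hξ.1.le, hξ.2.le⟩
    calc _ = ((k + n + 1).choose k : ℝ) * (a ^ (k + 1) * (1 - a) ^ (n + 1)) := by ring
      _ ≤ ((k + n + 1).choose k : ℝ) * ((b - a) * (n + 1) * (ξ ^ k * (1 - ξ) ^ n)) := by
          gcongr
      _ = _ := by
          rw [← mul_assoc ((k + n + 1 : ℕ) : ℝ), ← mul_assoc _ _ (ξ ^ k), hchoose]; ring
  rw [derivative_binomialCDF, eq_div_iff (sub_pos.2 hab).ne', Nat.add_sub_cancel] at hslope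
  simp only [eval_neg, eval_mul, eval_natCast] at hslope
  have hm : ((k + n + 1 + 1 : ℕ) : ℝ) = k + n + 2 := by push_cast; ring
  rw [binomialCDF_succ, eval_sub, eval_mul, eval_X, hm]
  push_cast
  linarith

theorem quarter_le_eval_binomialCDF {k m : ℕ} (hkm : k + 2 ≤ m) :
    1 / 4 ≤ (binomialCDF ℝ m k).eval (((k : ℝ) + 1) / m) := by
  induction m, hkm using Nat.le_induction with
  | base => simpa [add_assoc] using quarter_le_eval_binomialCDF_add_two k
  | succ m hkm ih => exact ih.trans (eval_binomialCDF_le_eval_binomialCDF_succ hkm)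

/-- For a binomial random variable `X ~ B(m, p)` with `0 ≤ p < 1 - 1/m`,
the probability that `X` is at most its expected value `m·p` exceeds `1/4`. -/
theorem binomial_le_mean_gt_quarter (m : ℕ) (hm : 0 < m) (p : ℝ)
    (hp₁ : 0 ≤ p) (hp₂ : p < 1 - 1 / (m : ℝ)) :
    (1 : ℝ) / 4 <
      ∑ j ∈ Finset.Iic ⌊(m : ℝ) * p⌋₊,
        (m.choose j : ℝ) * p ^ j * (1 - p) ^ (m - j) := by
  set k := ⌊(m : ℝ) * p⌋₊
  have hm' : (0 : ℝ) < m := by exact_mod_cast hm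
  have hpk : p < (k + 1) / m := by
    rw [lt_div_iff₀ hm', mul_comm]
    exact Nat.lt_floor_add_one _
  have hkm : k + 2 ≤ m := by
    have hk : (k : ℝ) ≤ m * p := Nat.floor_le (by positivity)
    have : (m : ℝ) * p < m - 1 := by
      calc (m : ℝ) * p < m * (1 - 1 / m) := by gcongr
        _ = m - 1 := by field_simp
    have : (k : ℝ) + 1 < m := by linarith
    exact_mod_cast this
  have hpivot : ((k : ℝ) + 1) / m ≤ 1 := by
    rw [div_le_one hm']
    exact_mod_cast (show k + 1 ≤ m by omega)
  rw [← Nat.range_succ_eq_Iic, ← eval_binomialCDF]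
  calc 1 / 4 ≤ (binomialCDF ℝ m k).eval (((k : ℝ) + 1) / m) := quarter_le_eval_binomialCDF hkm
    _ < (binomialCDF ℝ m k).eval p := strictAntiOn_eval_binomialCDF (by omega)
      ⟨hp₁, hpk.le.trans hpivot⟩ ⟨hp₁.trans hpk.le, hpivot⟩ hpk
end

section
/- Let m be a positive integer and k an integer with 1 ≤ k ≤ m − 1. For every real p with k/m < p ≤ (k+1)/m, the probability that a B(m, p)-distributed random variable X satisfies X ≥ m·p is at least the probability that a B(m, k/m)-distributed random variable Y satisfies Y ≥ k + 1. Equivalently, the sum over j from ⌈m·p⌉ to m of C(m, j)·p^j·(1−p)^(m−j) is at least the sum over j from k+1 to m of C(m, j)·(k/m)^j·(1−k/m)^(m−j). -/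
/-!
Since `k/m < p ≤ (k+1)/m`, we have `⌈m p⌉ = k + 1`, so both sums run over `j = k+1, …, m` and it
suffices to compare them term by term. The derivative of `x ↦ x^j (1-x)^(m-j)` is
`x^(j-1) (1-x)^(m-j-1) (j - m x)`, so this function increases on `[0, j/m]`, an interval that
contains both `k/m` and `p` when `j ≥ k + 1`.
-/

open Set

theorem hasDerivAt_pow_mul_one_sub_pow (a b : ℕ) (x : ℝ) :
    HasDerivAt (fun x : ℝ => x ^ a * (1 - x) ^ b)
      (a * x ^ (a - 1) * (1 - x) ^ b - b * x ^ a * (1 - x) ^ (b - 1)) x :=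
  ((hasDerivAt_pow a x).fun_mul (((hasDerivAt_id' x).const_sub 1).fun_pow b)).congr_deriv
    (by ring)

theorem monotoneOn_pow_mul_one_sub_pow (a b : ℕ) :
    MonotoneOn (fun x : ℝ => x ^ a * (1 - x) ^ b) (Icc 0 (a / (a + b))) := by
  refine monotoneOn_of_hasDerivWithinAt_nonneg (convex_Icc _ _) (by fun_prop)
    (fun x _ => (hasDerivAt_pow_mul_one_sub_pow a b x).hasDerivWithinAt) fun x hx => ?_
  rw [interior_Icc] at hx
  obtain ⟨hx₀, hx₁⟩ := hx
  rcases a with _ | a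
  · simp only [CharP.cast_eq_zero, zero_add, zero_div] at hx₁
    linarith
  rcases b with _ | b
  · simp only [Nat.cast_add, Nat.cast_one, add_tsub_cancel_right, pow_zero, mul_one,
      CharP.cast_eq_zero, zero_mul, zero_tsub, sub_zero]
    positivity
  have hx_lt : (a + 1 + (b + 1) : ℝ) * x < a + 1 := by
    push_cast at hx₁
    rwa [lt_div_iff₀ (by positivity), mul_comm] at hx₁
  have hfactor : ((a + 1 : ℕ) : ℝ) * x ^ a * (1 - x) ^ (b + 1)
        - ((b + 1 : ℕ) : ℝ) * x ^ (a + 1) * (1 - x) ^ b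
      = x ^ a * (1 - x) ^ b * ((a + 1) - (a + 1 + (b + 1)) * x) := by
    push_cast
    ring
  simp only [Nat.add_sub_cancel]
  rw [hfactor]
  have : 0 < 1 - x := by nlinarith
  have : 0 ≤ (a + 1 : ℝ) - (a + 1 + (b + 1)) * x := by linarith
  positivity

theorem binomial_ge_mean_lower_bound_general (m k : ℕ) (hm : 0 < m)
    (p : ℝ) (hp₁ : (k : ℝ) / m < p) (hp₂ : p ≤ ((k : ℝ) + 1) / m) :
    ∑ j ∈ Finset.Icc (k + 1) m,
        (m.choose j : ℝ) * ((k : ℝ) / m) ^ j * (1 - (k : ℝ) / m) ^ (m - j) ≤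
      ∑ j ∈ Finset.Icc ⌈(m : ℝ) * p⌉₊ m,
        (m.choose j : ℝ) * p ^ j * (1 - p) ^ (m - j) := by
  have hm₀ : (0 : ℝ) < m := by exact_mod_cast hm
  have hceil : ⌈(m : ℝ) * p⌉₊ = k + 1 := by
    rw [Nat.ceil_eq_iff k.add_one_ne_zero, Nat.add_sub_cancel, mul_comm, ← div_lt_iff₀ hm₀,
      ← le_div_iff₀ hm₀]
    push_cast
    exact ⟨hp₁, hp₂⟩
  rw [hceil]
  refine Finset.sum_le_sum fun j hj => ?_
  obtain ⟨hkj, hjm⟩ := Finset.mem_Icc.mp hj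
  have hinterval : Icc (0 : ℝ) ((k + 1) / m) ⊆ Icc 0 (j / (j + (m - j : ℕ) : ℝ)) := by
    rw [Nat.cast_sub hjm, add_sub_cancel]
    exact Icc_subset_Icc_right (div_le_div_of_nonneg_right (by exact_mod_cast hkj) hm₀.le)
  have hk₀ : (0 : ℝ) ≤ k / m := by positivity
  have hmono := monotoneOn_pow_mul_one_sub_pow j (m - j)
    (hinterval ⟨hk₀, by gcongr; linarith⟩) (hinterval ⟨by linarith, hp₂⟩) hp₁.le
  simp only [mul_assoc]
  gcongr

/-- Lemma 1: for `1 ≤ k ≤ m - 1` and `k/m < p ≤ (k+1)/m`,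
`P_{X ~ B(m,p)}[X ≥ m·p] ≥ P_{Y ~ B(m, k/m)}[Y ≥ k + 1]`. -/
theorem binomial_ge_mean_lower_bound (m k : ℕ) (hm : 0 < m) (hk₁ : 1 ≤ k)
    (hk₂ : k ≤ m - 1) (p : ℝ) (hp₁ : (k : ℝ) / m < p) (hp₂ : p ≤ ((k : ℝ) + 1) / m) :
    ∑ j ∈ Finset.Icc (k + 1) m,
        (m.choose j : ℝ) * ((k : ℝ) / m) ^ j * (1 - (k : ℝ) / m) ^ (m - j) ≤
      ∑ j ∈ Finset.Icc ⌈(m : ℝ) * p⌉₊ m,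
        (m.choose j : ℝ) * p ^ j * (1 - p) ^ (m - j) :=
  binomial_ge_mean_lower_bound_general m k hm p hp₁ hp₂
end

section
/- Let m ≥ 2 be an integer. For every real p with 1/m < p < 1, the probability that a B(m, p)-distributed random variable X satisfies X ≥ m·p is at least 1 minus the maximum, over integers k with 1 ≤ k ≤ m − 1, of the probability that a B(m, k/m)-distributed random variable Y satisfies Y ≤ k. -/
/-!
The binomial probabilities are the values of the Bernstein polynomials `b_{m,j}`, and the
lower tail `∑_{j ≤ k} b_{m,j}` has derivative `-m · b_{m-1,k}` (the derivatives telescope), so it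
is antitone on `[0, 1]`. With `k := ⌈m p⌉ - 1` we have `1 ≤ k ≤ m - 1` and `k / m ≤ p`, hence
`P_p[X ≥ m p] = 1 - P_p[X ≤ k] ≥ 1 - P_{k/m}[Y ≤ k]`.
-/

open Finset Polynomial

namespace bernsteinPolynomial

variable (R : Type*) [CommRing R]

theorem derivative_sum_Iic (n k : ℕ) :
    derivative (∑ ν ∈ Iic k, bernsteinPolynomial R n ν) =
      -(n * bernsteinPolynomial R (n - 1) k) := by
  rw [← Nat.range_succ_eq_Iic]
  induction k with
  | zero => simp [derivative_zero]
  | succ k ih =>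
    rw [sum_range_succ, derivative_add, ih, derivative_succ]
    ring

theorem sum_Ioc_eq_one_sub_sum_Iic {k n : ℕ} (hkn : k ≤ n) :
    ∑ ν ∈ Ioc k n, bernsteinPolynomial R n ν = 1 - ∑ ν ∈ Iic k, bernsteinPolynomial R n ν := by
  rw [eq_sub_iff_add_eq', ← sum_union (Iic_disjoint_Ioc le_rfl), Iic_union_Ioc_eq_Iic hkn,
    ← Nat.range_succ_eq_Iic, sum]

variable {R}

theorem eval_sum (s : Finset ℕ) (n : ℕ) (x : R) :
    (∑ ν ∈ s, bernsteinPolynomial R n ν).eval x =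
      ∑ ν ∈ s, (n.choose ν : R) * x ^ ν * (1 - x) ^ (n - ν) := by
  simp [eval_finsetSum, bernsteinPolynomial]

theorem eval_nonneg {n ν : ℕ} {x : ℝ} (hx : x ∈ Set.Icc (0 : ℝ) 1) :
    0 ≤ (bernsteinPolynomial ℝ n ν).eval x := by
  simp only [bernsteinPolynomial, eval_mul, eval_pow, eval_sub, eval_one, eval_X, eval_natCast]
  exact mul_nonneg (mul_nonneg (Nat.cast_nonneg _) (pow_nonneg hx.1 _))
    (pow_nonneg (sub_nonneg.mpr hx.2) _)

theorem antitoneOn_eval_sum_Iic (n k : ℕ) :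
    AntitoneOn (fun x : ℝ => (∑ ν ∈ Iic k, bernsteinPolynomial ℝ n ν).eval x) (Set.Icc 0 1) := by
  refine antitoneOn_of_deriv_nonpos (convex_Icc 0 1) (Polynomial.continuous _).continuousOn
    (Polynomial.differentiable _).differentiableOn fun x hx => ?_
  rw [Polynomial.deriv, derivative_sum_Iic, eval_neg, eval_mul, eval_natCast, neg_nonpos]
  exact mul_nonneg n.cast_nonneg (eval_nonneg (interior_subset hx))

end bernsteinPolynomial

/-- Corollary 1: for `m ≥ 2` and `1/m < p < 1`,
`P_{X ~ B(m,p)}[X ≥ m·p] ≥ 1 - max_{1 ≤ k ≤ m-1} P_{Y ~ B(m, k/m)}[Y ≤ k]`. -/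
theorem binomial_ge_mean_ge_one_sub_max (m : ℕ) (hm : 2 ≤ m) (p : ℝ)
    (hp₁ : 1 / (m : ℝ) < p) (hp₂ : p < 1) :
    1 - (Finset.Icc 1 (m - 1)).sup'
        (Finset.nonempty_Icc.mpr (by omega))
        (fun k => ∑ j ∈ Finset.Iic k,
          (m.choose j : ℝ) * ((k : ℝ) / m) ^ j * (1 - (k : ℝ) / m) ^ (m - j)) ≤
      ∑ j ∈ Finset.Icc ⌈(m : ℝ) * p⌉₊ m,
        (m.choose j : ℝ) * p ^ j * (1 - p) ^ (m - j) := by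
  have hm₀ : (0 : ℝ) < m := by positivity
  have hmp : 1 < (m : ℝ) * p := by rwa [div_lt_iff₀ hm₀, mul_comm] at hp₁
  have hone_lt_ceil : 1 < ⌈(m : ℝ) * p⌉₊ := Nat.lt_ceil.mpr (by exact_mod_cast hmp)
  have hceil_le : ⌈(m : ℝ) * p⌉₊ ≤ m := Nat.ceil_le.mpr (by nlinarith)
  set k := ⌈(m : ℝ) * p⌉₊ - 1
  have hk_mem : k ∈ Icc 1 (m - 1) := mem_Icc.mpr ⟨by omega, by omega⟩
  have hk_lt : (k : ℝ) < m * p := Nat.lt_ceil.mp (by omega)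
  have hkm_le_p : (k : ℝ) / m ≤ p := by rw [div_le_iff₀ hm₀]; linarith
  have hkm_mem : (k : ℝ) / m ∈ Set.Icc (0 : ℝ) 1 :=
    ⟨by positivity, by rw [div_le_one hm₀]; exact_mod_cast (by omega : k ≤ m)⟩
  have hlower := bernsteinPolynomial.antitoneOn_eval_sum_Iic m k hkm_mem
    ⟨((one_div_pos.mpr hm₀).trans hp₁).le, hp₂.le⟩ hkm_le_p
  have hsup := le_sup' (fun k => ∑ j ∈ Finset.Iic k,
    (m.choose j : ℝ) * ((k : ℝ) / m) ^ j * (1 - (k : ℝ) / m) ^ (m - j)) hk_mem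
  have htail := congrArg (eval p)
    (bernsteinPolynomial.sum_Ioc_eq_one_sub_sum_Iic ℝ (by omega : k ≤ m))
  rw [show ⌈(m : ℝ) * p⌉₊ = k + 1 by omega, Icc_add_one_left_eq_Ioc]
  simp only [bernsteinPolynomial.eval_sum, eval_sub, eval_one] at hlower htail hsup ⊢
  linarith
end

section
/- Let m ≥ 2 be an integer and k an integer with 1 ≤ k ≤ m − 1. With β_k = (1/(1+k))·(1 + 1/k)^(2/3), γ_{m,k} = 1/(m − k), and θ = 17/(3·2^(1/3)) − 3·2^(1/3), the following inequality holds: Φ[(β_k·θ + (1/3)·γ_{m,k}) / √(β_k + γ_{m,k})] ≤ Φ[(β_k·θ + 1/3) / √(β_k + 1)]. -/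
/-!
Since `Φ` is monotone and both numerators are nonnegative, it suffices to compare the squares
`(βθ + γ/3)² (β + 1) ≤ (βθ + 1/3)² (β + γ)` for `γ = 1/(m - k) ∈ (0, 1]`. The difference of the
two sides is a concave quadratic in `γ` vanishing at `γ = 1`; it factors as
`(1 - γ) (β (1/9 - βθ(θ - 2/3)) + (β + 1) γ / 9)`, which is nonnegative as soon as
`β ≤ 1` and `(θ - 1/3)² ≤ 2/9`. Both hold: `β_k ≤ 1/k` because `(1 + 1/k)^(2/3) ≤ 1 + 1/k`,
and `θ ≈ 0.718` follows from `1.25 < 2^(1/3) < 1.27`.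
-/

open Real MeasureTheory

noncomputable def stdNormalCDF (x : ℝ) : ℝ :=
  ∫ s in Set.Iic x, (1 / Real.sqrt (2 * Real.pi)) * Real.exp (-s ^ 2 / 2)

lemma integrable_stdNormalDensity :
    Integrable fun s : ℝ => (1 / √(2 * π)) * exp (-s ^ 2 / 2) := by
  convert (integrable_exp_neg_mul_sq (b := 1 / 2) (by norm_num)).const_mul (1 / √(2 * π))
    using 4
  ring

lemma stdNormalCDF_mono : Monotone stdNormalCDF := fun _ _ hxy =>
  setIntegral_mono_set integrable_stdNormalDensity.integrableOn
    (.of_forall fun _ => by positivity) (Set.Iic_subset_Iic.mpr hxy).eventuallyLE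

lemma div_sqrt_le_div_sqrt_of_sq_mul_le {x y c d : ℝ} (hy : 0 ≤ y) (hc : 0 < c) (hd : 0 < d)
    (h : x ^ 2 * d ≤ y ^ 2 * c) : x / √c ≤ y / √d :=
  calc x / √c ≤ |x| / √c := div_le_div_of_nonneg_right (le_abs_self x) (sqrt_nonneg c)
    _ = √(x ^ 2 / c) := by rw [sqrt_div' _ hc.le, sqrt_sq_eq_abs]
    _ ≤ √(y ^ 2 / d) := sqrt_le_sqrt ((div_le_div_iff₀ hc hd).mpr h)
    _ = y / √d := by rw [sqrt_div' _ hd.le, sqrt_sq hy]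

lemma sq_mul_le_sq_mul_of_le_one {β θ γ : ℝ} (hβ₀ : 0 ≤ β) (hβ₁ : β ≤ 1)
    (hθ : (θ - 1 / 3) ^ 2 ≤ 2 / 9) (hγ₀ : 0 ≤ γ) (hγ₁ : γ ≤ 1) :
    (β * θ + 1 / 3 * γ) ^ 2 * (β + 1) ≤ (β * θ + 1 / 3) ^ 2 * (β + γ) := by
  have hcoeff : β * θ * (θ - 2 / 3) ≤ 1 / 9 := by
    have : β * θ * (θ - 2 / 3) = β * ((θ - 1 / 3) ^ 2 - 1 / 9) := by ring
    nlinarith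
  have hfactor : (β * θ + 1 / 3) ^ 2 * (β + γ) - (β * θ + 1 / 3 * γ) ^ 2 * (β + 1) =
      (1 - γ) * (β * (1 / 9 - β * θ * (θ - 2 / 3)) + (β + 1) * γ / 9) := by ring
  have : 0 ≤ (1 - γ) * (β * (1 / 9 - β * θ * (θ - 2 / 3)) + (β + 1) * γ / 9) :=
    mul_nonneg (sub_nonneg.mpr hγ₁)
      (add_nonneg (mul_nonneg hβ₀ (sub_nonneg.mpr hcoeff)) (by positivity))
  linarith

lemma cbrt_two_mem : (2 : ℝ) ^ ((1 : ℝ) / 3) ∈ Set.Ioo 1.25 1.27 := by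
  set c := (2 : ℝ) ^ ((1 : ℝ) / 3)
  have hc₀ : 0 < c := by positivity
  have hc₃ : c ^ 3 = 2 := by
    rw [← rpow_natCast, ← rpow_mul zero_le_two]
    norm_num
  constructor <;> nlinarith [sq_nonneg (c - 1.25), sq_nonneg (c - 1.27)]

namespace CampPaulson

noncomputable def β (k : ℝ) : ℝ := 1 / (1 + k) * (1 + 1 / k) ^ ((2 : ℝ) / 3)

noncomputable def θ : ℝ := 17 / (3 * (2 : ℝ) ^ ((1 : ℝ) / 3)) - 3 * (2 : ℝ) ^ ((1 : ℝ) / 3)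

lemma β_pos {k : ℝ} (hk : 0 < k) : 0 < β k := by
  unfold β
  positivity

lemma β_le_inv {k : ℝ} (hk : 0 < k) : β k ≤ 1 / k := by
  have hpow : (1 + 1 / k) ^ ((2 : ℝ) / 3) ≤ 1 + 1 / k :=
    rpow_le_self_of_one_le (by simp [hk.le]) (by norm_num)
  calc β k ≤ 1 / (1 + k) * (1 + 1 / k) := by unfold β; gcongr
    _ = 1 / k := by field_simp; ring

lemma θ_mem : θ ∈ Set.Icc 0.65 0.79 := by
  obtain ⟨hc₁, hc₂⟩ := cbrt_two_mem
  set c := (2 : ℝ) ^ ((1 : ℝ) / 3)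
  have h₁ : 17 / (3 * c) ≤ 68 / 15 := by
    rw [div_le_div_iff₀ (by positivity) (by norm_num)]
    linarith
  have h₂ : 1700 / 381 ≤ 17 / (3 * c) := by
    rw [div_le_div_iff₀ (by norm_num) (by positivity)]
    linarith
  constructor <;> unfold θ <;> linarith

end CampPaulson

theorem campPaulson_gamma_bound_general (m k : ℕ) (hk₁ : 1 ≤ k)
    (hk₂ : k ≤ m - 1) :
    stdNormalCDF
        (((1 / (1 + (k : ℝ)) * (1 + 1 / (k : ℝ)) ^ ((2 : ℝ) / 3)) *
            (17 / (3 * (2 : ℝ) ^ ((1 : ℝ) / 3)) - 3 * (2 : ℝ) ^ ((1 : ℝ) / 3)) +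
          (1 / 3) * (1 / ((m : ℝ) - k))) /
          Real.sqrt (1 / (1 + (k : ℝ)) * (1 + 1 / (k : ℝ)) ^ ((2 : ℝ) / 3) +
            1 / ((m : ℝ) - k))) ≤
      stdNormalCDF
        (((1 / (1 + (k : ℝ)) * (1 + 1 / (k : ℝ)) ^ ((2 : ℝ) / 3)) *
            (17 / (3 * (2 : ℝ) ^ ((1 : ℝ) / 3)) - 3 * (2 : ℝ) ^ ((1 : ℝ) / 3)) +
          1 / 3) /
          Real.sqrt (1 / (1 + (k : ℝ)) * (1 + 1 / (k : ℝ)) ^ ((2 : ℝ) / 3) + 1)) := by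
  change stdNormalCDF ((CampPaulson.β k * CampPaulson.θ + 1 / 3 * (1 / ((m : ℝ) - k))) /
      √(CampPaulson.β k + 1 / ((m : ℝ) - k))) ≤
    stdNormalCDF ((CampPaulson.β k * CampPaulson.θ + 1 / 3) / √(CampPaulson.β k + 1))
  have hk : (1 : ℝ) ≤ k := by exact_mod_cast hk₁
  have hmk : (1 : ℝ) ≤ m - k := by
    have : k + 1 ≤ m := by omega
    rw [le_sub_iff_add_le']
    exact_mod_cast this
  have hβ₀ := CampPaulson.β_pos (k := k) (by positivity)
  have hβ₁ : CampPaulson.β k ≤ 1 :=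
    (CampPaulson.β_le_inv (by positivity)).trans (div_le_one_of_le₀ hk (by positivity))
  have hγ₀ : 0 < 1 / ((m : ℝ) - k) := by positivity
  have hγ₁ : 1 / ((m : ℝ) - k) ≤ 1 := div_le_one_of_le₀ hmk (by positivity)
  obtain ⟨hθ₁, hθ₂⟩ := CampPaulson.θ_mem
  have hθ : (CampPaulson.θ - 1 / 3) ^ 2 ≤ 2 / 9 := by nlinarith
  have hnum : 0 ≤ CampPaulson.β k * CampPaulson.θ + 1 / 3 := by nlinarith
  exact stdNormalCDF_mono (div_sqrt_le_div_sqrt_of_sq_mul_le hnum (by positivity) (by positivity)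
    (sq_mul_le_sq_mul_of_le_one hβ₀.le hβ₁ hθ hγ₀.le hγ₁))

/-- Lemma 3: with `β_k = (1/(1+k))·(1+1/k)^(2/3)`, `γ_{m,k} = 1/(m-k)` and
`θ = 17/(3·2^(1/3)) − 3·2^(1/3)`, one has
`Φ[(β_k θ + γ_{m,k}/3)/√(β_k + γ_{m,k})] ≤ Φ[(β_k θ + 1/3)/√(β_k + 1)]`. -/
theorem campPaulson_gamma_bound (m k : ℕ) (hm : 2 ≤ m) (hk₁ : 1 ≤ k)
    (hk₂ : k ≤ m - 1) :
    stdNormalCDF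
        (((1 / (1 + (k : ℝ)) * (1 + 1 / (k : ℝ)) ^ ((2 : ℝ) / 3)) *
            (17 / (3 * (2 : ℝ) ^ ((1 : ℝ) / 3)) - 3 * (2 : ℝ) ^ ((1 : ℝ) / 3)) +
          (1 / 3) * (1 / ((m : ℝ) - k))) /
          Real.sqrt (1 / (1 + (k : ℝ)) * (1 + 1 / (k : ℝ)) ^ ((2 : ℝ) / 3) +
            1 / ((m : ℝ) - k))) ≤
      stdNormalCDF
        (((1 / (1 + (k : ℝ)) * (1 + 1 / (k : ℝ)) ^ ((2 : ℝ) / 3)) *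
            (17 / (3 * (2 : ℝ) ^ ((1 : ℝ) / 3)) - 3 * (2 : ℝ) ^ ((1 : ℝ) / 3)) +
          1 / 3) /
          Real.sqrt (1 / (1 + (k : ℝ)) * (1 + 1 / (k : ℝ)) ^ ((2 : ℝ) / 3) + 1)) :=
  campPaulson_gamma_bound_general m k hk₁ hk₂
end

section
/- Let m ≥ 2 be an integer and let X be a random variable distributed according to B(m, 1/m). Then P[X ≤ 1] ≤ 3/4; equivalently, (1 − 1/m)^m + (1 − 1/m)^(m−1) ≤ 3/4. -/
/-!
Write `m = n + 1`. Then `(1 - 1/m)^m + (1 - 1/m)^(m-1) = (2n+1) n^n / (n+1)^(n+1)`, so the claim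
is `4 (2n+1) n^n ≤ 3 (n+1)^(n+1)`, i.e. `(1 + 1/n)^n ≥ 4 (2n+1) / (3 (n+1))`. The first four terms
of the binomial expansion of `(1 + 1/n)^n` already suffice: they exceed the right-hand side by
`((n-1)/n)^2 / (3 (n+1))`, which vanishes exactly at `m = 2`, where the bound is attained.
-/

open Finset

theorem sum_range_choose_mul_pow_le_one_add_pow {R : Type*} [CommSemiring R] [PartialOrder R]
    [IsOrderedRing R] {y : R} (hy : 0 ≤ y) (n j : ℕ) :
    ∑ k ∈ range j, (n.choose k : R) * y ^ k ≤ (1 + y) ^ n := by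
  have hvanish : ∀ k ∈ range j, (n.choose k : R) * y ^ k ≠ 0 → k ≤ n := fun k _ hk => by
    by_contra h
    simp [Nat.choose_eq_zero_of_lt (not_le.mp h)] at hk
  calc ∑ k ∈ range j, (n.choose k : R) * y ^ k
      = ∑ k ∈ range j with k ≤ n, (n.choose k : R) * y ^ k := (sum_filter_of_ne hvanish).symm
    _ ≤ ∑ k ∈ range (n + 1), (n.choose k : R) * y ^ k :=
        sum_le_sum_of_subset_of_nonneg (fun k hk => by simp at hk ⊢; omega)
          (fun k _ _ => by positivity)
    _ = (1 + y) ^ n := by simp [add_comm 1 y, add_pow, mul_comm]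

theorem Nat.cast_choose_three (K : Type*) [Field K] [CharZero K] (n : ℕ) :
    (n.choose 3 : K) = n * (n - 1) * (n - 2) / 6 := by
  have h := congrArg (Nat.cast (R := K)) (Nat.descFactorial_eq_factorial_mul_choose n 3)
  rw [← descPochhammer_eval_eq_descFactorial] at h
  simp only [descPochhammer_succ_right, descPochhammer_zero, CharP.cast_eq_zero, sub_zero, one_mul,
    Nat.cast_one, Nat.cast_ofNat, Polynomial.eval_mul, Polynomial.eval_X, Polynomial.eval_sub,
    Polynomial.eval_one, Polynomial.eval_ofNat, Nat.factorial, Nat.succ_eq_add_one, Nat.reduceAdd,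
    zero_add, mul_one, Nat.reduceMul, Nat.cast_mul] at h
  linear_combination -h / 6

theorem four_mul_two_mul_add_one_mul_pow_self_le {n : ℕ} (hn : 1 ≤ n) :
    4 * (2 * n + 1) * n ^ n ≤ 3 * (n + 1) ^ (n + 1) := by
  have hcubic := sum_range_choose_mul_pow_le_one_add_pow (y := 1 / (n : ℝ)) (by positivity) n 4
  simp only [sum_range_succ, sum_range_zero, zero_add, Nat.choose_zero_right,
    Nat.choose_one_right, Nat.cast_choose_two, Nat.cast_choose_three, Nat.cast_one, pow_zero,
    pow_one, mul_one] at hcubic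
  have hgap : 4 * (2 * n + 1) ≤ 3 * (n + 1) * (1 + 1 / (n : ℝ)) ^ n := by
    calc (4 * (2 * n + 1) : ℝ)
        ≤ 3 * (n + 1) * (1 + n * (1 / n) + n * (n - 1) / 2 * (1 / n) ^ 2 +
            n * (n - 1) * (n - 2) / 6 * (1 / n) ^ 3) := by
          have hsq : 0 ≤ ((n - 1) / (n : ℝ)) ^ 2 := sq_nonneg _
          have hid : 3 * (n + 1) * (1 + n * (1 / n) + n * (n - 1) / 2 * (1 / n) ^ 2 +
              n * (n - 1) * (n - 2) / 6 * (1 / n) ^ 3) - 4 * (2 * n + 1) =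
              ((n - 1) / (n : ℝ)) ^ 2 := by
            field_simp; ring
          linarith
      _ ≤ 3 * (n + 1) * (1 + 1 / (n : ℝ)) ^ n := by gcongr
  have hpow : (1 + 1 / (n : ℝ)) ^ n * n ^ n = (n + 1) ^ n := by
    rw [← mul_pow]; congr 1; field_simp
  have hreal : 4 * (2 * n + 1) * (n : ℝ) ^ n ≤ 3 * (n + 1) ^ (n + 1) :=
    calc 4 * (2 * n + 1) * (n : ℝ) ^ n ≤ 3 * (n + 1) * (1 + 1 / (n : ℝ)) ^ n * n ^ n := by gcongr
      _ = 3 * (n + 1) ^ (n + 1) := by rw [mul_assoc, hpow]; ring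
  exact_mod_cast hreal

/-- Lemma 4: for `m ≥ 2` and `X ~ B(m, 1/m)`, `P[X ≤ 1] ≤ 3/4`; equivalently,
`(1 - 1/m)^m + (1 - 1/m)^(m-1) ≤ 3/4`. -/
theorem binomial_le_one_le_three_quarters (m : ℕ) (hm : 2 ≤ m) :
    (∑ j ∈ Finset.Iic 1,
        (m.choose j : ℝ) * (1 / (m : ℝ)) ^ j * (1 - 1 / (m : ℝ)) ^ (m - j) ≤ 3 / 4) ∧
      (1 - 1 / (m : ℝ)) ^ m + (1 - 1 / (m : ℝ)) ^ (m - 1) ≤ 3 / 4 := by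
  have hsum : ∑ j ∈ Finset.Iic 1, (m.choose j : ℝ) * (1 / (m : ℝ)) ^ j * (1 - 1 / (m : ℝ)) ^ (m - j)
      = (1 - 1 / (m : ℝ)) ^ m + (1 - 1 / (m : ℝ)) ^ (m - 1) := by
    rw [show Finset.Iic 1 = {0, 1} from rfl, sum_pair zero_ne_one]
    simp only [Nat.choose_zero_right, Nat.choose_one_right, Nat.cast_one, pow_zero, pow_one,
      Nat.sub_zero, mul_one_div_cancel (by positivity : (m : ℝ) ≠ 0), one_mul]
  obtain ⟨n, rfl⟩ : ∃ n, m = n + 1 := ⟨m - 1, by omega⟩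
  have hbound : (1 - 1 / ((n + 1 : ℕ) : ℝ)) ^ (n + 1) + (1 - 1 / ((n + 1 : ℕ) : ℝ)) ^ (n + 1 - 1)
      ≤ 3 / 4 := by
    have key : (4 * (2 * n + 1) * n ^ n : ℝ) ≤ 3 * (n + 1) ^ (n + 1) := by
      exact_mod_cast four_mul_two_mul_add_one_mul_pow_self_le (by omega : 1 ≤ n)
    calc (1 - 1 / ((n + 1 : ℕ) : ℝ)) ^ (n + 1) + (1 - 1 / ((n + 1 : ℕ) : ℝ)) ^ (n + 1 - 1)
        = (2 * n + 1) * n ^ n / (n + 1) ^ (n + 1) := by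
          have hn1 : (n : ℝ) + 1 ≠ 0 := by positivity
          rw [Nat.add_sub_cancel, Nat.cast_succ, one_sub_div hn1, add_sub_cancel_right, div_pow,
            div_pow, div_add_div _ _ (pow_ne_zero _ hn1) (pow_ne_zero _ hn1),
            div_eq_div_iff (by positivity) (by positivity)]
          ring
      _ ≤ 3 / 4 := by rw [div_le_iff₀ (by positivity)]; linarith
  exact ⟨hsum ▸ hbound, hbound⟩
end

section
/- Let m be a positive integer and k an integer with 1 ≤ k ≤ m, and define F(m, p) = Σ_{j=k}^{m} C(m, j)·p^j·(1−p)^(m−j). Then the function p ↦ F(m, p) is strictly increasing on the open interval ((k−1)/m, k/m) ∩ (0, 1); consequently, for p in ((k−1)/m, k/m] ∩ (0, 1), the probability that a B(m, p)-distributed random variable is at least m·p, which equals Σ_{j=⌈m·p⌉}^{m} C(m, j)·p^j·(1−p)^(m−j), is strictly increasing in p on that interval. -/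
/-!
The tail `∑_{j ≥ k} C(m,j) p^j (1-p)^(m-j)` is a sum of Bernstein polynomials `b_{m,j}`. Since
`b_{m,j}' = m (b_{m-1,j-1} - b_{m-1,j})`, its derivative telescopes to `m b_{m-1,k-1}(p)`, which is
positive on `(0,1)`; so the tail is strictly increasing on `[0,1]`. On `((k-1)/m, k/m]` one has
`⌈mp⌉ = k`, so there the second function is the first one.
-/
open Polynomial Finset

lemma bernsteinPolynomial_eval {R : Type*} [CommRing R] (n ν : ℕ) (x : R) :
    (bernsteinPolynomial R n ν).eval x = n.choose ν * x ^ ν * (1 - x) ^ (n - ν) := by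
  simp [bernsteinPolynomial]

lemma bernsteinPolynomial_eval_pos {n ν : ℕ} (h : ν ≤ n) {x : ℝ} (hx : x ∈ Set.Ioo 0 1) :
    0 < (bernsteinPolynomial ℝ n ν).eval x := by
  have hchoose := Nat.choose_pos h
  have hx₀ := hx.1
  have hx₁ : 0 < 1 - x := sub_pos.2 hx.2
  rw [bernsteinPolynomial_eval]
  positivity

lemma derivative_sum_Icc_bernsteinPolynomial {R : Type*} [CommRing R] {n κ : ℕ} (h : κ ≤ n) :
    derivative (∑ ν ∈ Icc (κ + 1) (n + 1), bernsteinPolynomial R (n + 1) ν) =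
      (n + 1) * bernsteinPolynomial R n κ := by
  rw [← map_add_right_Icc, sum_map, derivative_sum]
  simp only [addRightEmbedding_apply, bernsteinPolynomial.derivative_succ, Nat.add_sub_cancel,
    Nat.cast_add_one, ← mul_sum]
  congr 1
  simpa only [neg_sub_neg, bernsteinPolynomial.eq_zero_of_lt R n.lt_add_one, neg_zero, zero_sub,
    neg_neg] using sum_Icc_sub h (fun ν => -bernsteinPolynomial R n ν)

theorem binomial_tail_strictMonoOn_Icc {m k : ℕ} (hk₁ : 1 ≤ k) (hk₂ : k ≤ m) :
    StrictMonoOn (fun p : ℝ => ∑ j ∈ Icc k m, (m.choose j : ℝ) * p ^ j * (1 - p) ^ (m - j))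
      (Set.Icc 0 1) := by
  obtain ⟨n, rfl⟩ : ∃ n, m = n + 1 := ⟨m - 1, by omega⟩
  obtain ⟨κ, rfl⟩ : ∃ κ, k = κ + 1 := ⟨k - 1, by omega⟩
  set T := ∑ ν ∈ Icc (κ + 1) (n + 1), bernsteinPolynomial ℝ (n + 1) ν
  have hT : (fun p : ℝ => ∑ j ∈ Icc (κ + 1) (n + 1),
      ((n + 1).choose j : ℝ) * p ^ j * (1 - p) ^ (n + 1 - j)) = fun p => T.eval p := by
    ext p
    simp only [T, eval_finsetSum, bernsteinPolynomial_eval]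
  rw [hT]
  refine strictMonoOn_of_deriv_pos (convex_Icc 0 1) T.continuousOn fun p hp => ?_
  rw [interior_Icc] at hp
  rw [Polynomial.deriv, derivative_sum_Icc_bernsteinPolynomial (by omega), eval_mul]
  have hb := bernsteinPolynomial_eval_pos (n := n) (ν := κ) (by omega) hp
  simp only [eval_add, eval_natCast, eval_one]
  positivity

lemma natCeil_mul_eq_of_mem_Ioc {m k : ℕ} (hk : k ≠ 0) {p : ℝ}
    (hp : p ∈ Set.Ioc (((k : ℝ) - 1) / m) ((k : ℝ) / m)) : ⌈(m : ℝ) * p⌉₊ = k := by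
  have hm : (0 : ℝ) < m := by
    rcases Nat.eq_zero_or_pos m with rfl | hm
    · simp only [Nat.cast_zero, div_zero, Set.Ioc_self, Set.mem_empty_iff_false] at hp
    · exact_mod_cast hm
  rw [Nat.ceil_eq_iff hk, Nat.cast_pred (Nat.pos_of_ne_zero hk), ← div_lt_iff₀' hm,
    ← le_div_iff₀' hm]
  exact hp

theorem binomial_tail_strictMonoOn_general (m k : ℕ) (hk₁ : 1 ≤ k) (hk₂ : k ≤ m) :
    StrictMonoOn
        (fun p : ℝ => ∑ j ∈ Finset.Icc k m,
          (m.choose j : ℝ) * p ^ j * (1 - p) ^ (m - j))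
        (Set.Ioo (((k : ℝ) - 1) / m) ((k : ℝ) / m) ∩ Set.Ioo 0 1) ∧
      StrictMonoOn
        (fun p : ℝ => ∑ j ∈ Finset.Icc ⌈(m : ℝ) * p⌉₊ m,
          (m.choose j : ℝ) * p ^ j * (1 - p) ^ (m - j))
        (Set.Ioc (((k : ℝ) - 1) / m) ((k : ℝ) / m) ∩ Set.Ioo 0 1) := by
  have hmono := binomial_tail_strictMonoOn_Icc hk₁ hk₂
  refine ⟨hmono.mono fun p hp => Set.Ioo_subset_Icc_self hp.2,
    (hmono.mono fun p hp => Set.Ioo_subset_Icc_self hp.2).congr fun p hp => ?_⟩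
  simp only [natCeil_mul_eq_of_mem_Ioc (by omega) hp.1]

/-- For `1 ≤ k ≤ m`, the function `p ↦ ∑_{j=k}^m C(m,j) p^j (1-p)^(m-j)` is strictly
increasing on `((k-1)/m, k/m) ∩ (0, 1)`; consequently
`p ↦ ∑_{j=⌈mp⌉}^m C(m,j) p^j (1-p)^(m-j)` is strictly increasing on
`((k-1)/m, k/m] ∩ (0, 1)`. -/
theorem binomial_tail_strictMonoOn (m k : ℕ) (hm : 0 < m) (hk₁ : 1 ≤ k) (hk₂ : k ≤ m) :
    StrictMonoOn
        (fun p : ℝ => ∑ j ∈ Finset.Icc k m,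
          (m.choose j : ℝ) * p ^ j * (1 - p) ^ (m - j))
        (Set.Ioo (((k : ℝ) - 1) / m) ((k : ℝ) / m) ∩ Set.Ioo 0 1) ∧
      StrictMonoOn
        (fun p : ℝ => ∑ j ∈ Finset.Icc ⌈(m : ℝ) * p⌉₊ m,
          (m.choose j : ℝ) * p ^ j * (1 - p) ^ (m - j))
        (Set.Ioc (((k : ℝ) - 1) / m) ((k : ℝ) / m) ∩ Set.Ioo 0 1) :=
  binomial_tail_strictMonoOn_general m k hk₁ hk₂
end

section
/- For every integer k ≥ 1, with α_k = (1 + 1/k)^(1/3)·(3 − 1/(3·(1+k))) − 3, β_k = (1/(1+k))·(1 + 1/k)^(2/3), and θ = 17/(3·2^(1/3)) − 3·2^(1/3), the inequality α_k ≤ θ·β_k holds, i.e. the ratio α_k/β_k is at most θ. -/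
/-!
Substituting `t = (1 + 1/k)^(1/3) ∈ [1, c]` with `c = 2^(1/3)` gives `1/(1+k) = (t³ - 1)/t³`, and
with `c³ = 2` the difference `θ β_k - α_k` factors as
`(t - 1)(c - t)((9c² - 17)t² + (1 + 9c² - 9c)t + 1) / (3ct²)`.
The quadratic factor is concave, so it is nonnegative on `[1, c]` as soon as it is at both endpoints,
which reduces to numerical bounds on `c ≈ 1.26`.
-/

open Real

lemma quadratic_nonneg_of_endpoints {a b d p q t : ℝ} (ha : a ≤ 0)
    (hp : 0 ≤ a * p ^ 2 + b * p + d) (hq : 0 ≤ a * q ^ 2 + b * q + d)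
    (hpt : p ≤ t) (htq : t ≤ q) : 0 ≤ a * t ^ 2 + b * t + d := by
  rcases htq.eq_or_lt with rfl | htq'
  · exact hq
  have hpq : 0 < q - p := by linarith
  have hinterp : (q - p) * (a * t ^ 2 + b * t + d) =
      (q - t) * (a * p ^ 2 + b * p + d) + (t - p) * (a * q ^ 2 + b * q + d) +
        (-a) * (q - p) * ((t - p) * (q - t)) := by ring
  refine nonneg_of_mul_nonneg_right ?_ hpq
  rw [hinterp]
  have := mul_nonneg (sub_nonneg.2 hpt) (sub_nonneg.2 htq)
  have := mul_nonneg (neg_nonneg.2 ha) hpq.le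
  have := sub_nonneg.2 htq
  have := sub_nonneg.2 hpt
  positivity

section CubeRootTwo

variable {c t : ℝ}

lemma quadratic_factor_nonneg (hc : c ^ 3 = 2) (h1 : 1 ≤ t) (h2 : t ≤ c) :
    0 ≤ (9 * c ^ 2 - 17) * t ^ 2 + (1 + 9 * c ^ 2 - 9 * c) * t + 1 := by
  have hc1 : 1 ≤ c := h1.trans h2
  refine quadratic_nonneg_of_endpoints ?_ ?_ ?_ h1 h2
  · nlinarith [sq_nonneg (c - 1.3)]
  · nlinarith [sq_nonneg (c - 1.25)]
  · nlinarith [sq_nonneg (c - 1.26)]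

lemma theta_beta_sub_alpha_eq (hc : c ^ 3 = 2) (hc0 : c ≠ 0) (ht0 : t ≠ 0) :
    (17 / (3 * c) - 3 * c) * ((t ^ 3 - 1) / t ^ 3 * t ^ 2) -
        (t * (3 - (t ^ 3 - 1) / (3 * t ^ 3)) - 3) =
      (t - 1) * (c - t) * ((9 * c ^ 2 - 17) * t ^ 2 + (1 + 9 * c ^ 2 - 9 * c) * t + 1) /
        (3 * c * t ^ 2) := by
  field_simp
  linear_combination (9 * t - 9 * t ^ 3) * hc

lemma alpha_le_theta_beta_of_cube_root (hc : c ^ 3 = 2) (h1 : 1 ≤ t) (h2 : t ≤ c) :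
    t * (3 - (t ^ 3 - 1) / (3 * t ^ 3)) - 3 ≤
      (17 / (3 * c) - 3 * c) * ((t ^ 3 - 1) / t ^ 3 * t ^ 2) := by
  have ht0 : 0 < t := zero_lt_one.trans_le h1
  have hc0 : 0 < c := ht0.trans_le h2
  rw [← sub_nonneg, theta_beta_sub_alpha_eq hc hc0.ne' ht0.ne']
  have := quadratic_factor_nonneg hc h1 h2
  have := sub_nonneg.2 h1
  have := sub_nonneg.2 h2
  positivity

end CubeRootTwo

lemma rpow_one_third_pow_three {x : ℝ} (hx : 0 ≤ x) : (x ^ ((1 : ℝ) / 3)) ^ 3 = x := by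
  simpa using rpow_inv_natCast_pow hx three_ne_zero

lemma rpow_two_thirds {x : ℝ} (hx : 0 ≤ x) : x ^ ((2 : ℝ) / 3) = (x ^ ((1 : ℝ) / 3)) ^ 2 := by
  rw [← rpow_mul_natCast hx]
  norm_num

lemma alpha_le_theta_beta_of_mem_Icc {x : ℝ} (h1 : 1 ≤ x) (h2 : x ≤ 2) :
    x ^ ((1 : ℝ) / 3) * (3 - (x - 1) / (3 * x)) - 3 ≤
      (17 / (3 * (2 : ℝ) ^ ((1 : ℝ) / 3)) - 3 * (2 : ℝ) ^ ((1 : ℝ) / 3)) *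
        ((x - 1) / x * x ^ ((2 : ℝ) / 3)) := by
  have hx0 : 0 ≤ x := zero_le_one.trans h1
  have key := alpha_le_theta_beta_of_cube_root (rpow_one_third_pow_three zero_le_two)
    (one_le_rpow h1 (by norm_num)) (rpow_le_rpow hx0 h2 (by norm_num))
  rwa [rpow_one_third_pow_three hx0, ← rpow_two_thirds hx0] at key

/-- For every integer `k ≥ 1`, with
`α_k = (1 + 1/k)^(1/3)·(3 − 1/(3(1+k))) − 3`,
`β_k = (1/(1+k))·(1 + 1/k)^(2/3)` and `θ = 17/(3·2^(1/3)) − 3·2^(1/3)`,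
one has `α_k ≤ θ·β_k`. -/
theorem alpha_le_theta_beta (k : ℕ) (hk : 1 ≤ k) :
    (1 + 1 / (k : ℝ)) ^ ((1 : ℝ) / 3) * (3 - 1 / (3 * (1 + (k : ℝ)))) - 3 ≤
      (17 / (3 * (2 : ℝ) ^ ((1 : ℝ) / 3)) - 3 * (2 : ℝ) ^ ((1 : ℝ) / 3)) *
        (1 / (1 + (k : ℝ)) * (1 + 1 / (k : ℝ)) ^ ((2 : ℝ) / 3)) := by
  have hk1 : (1 : ℝ) ≤ k := by exact_mod_cast hk
  have hk0 : (0 : ℝ) < k := zero_lt_one.trans_le hk1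
  have hx1 : 1 ≤ 1 + 1 / (k : ℝ) := le_add_of_nonneg_right (by positivity)
  have hx2 : 1 + 1 / (k : ℝ) ≤ 2 := by
    have : 1 / (k : ℝ) ≤ 1 := (div_le_one hk0).2 hk1
    linarith
  have hfrac : 1 / (1 + (k : ℝ)) = (1 + 1 / k - 1) / (1 + 1 / k) := by
    field_simp
    ring
  have hfrac3 : 1 / (3 * (1 + (k : ℝ))) = (1 + 1 / k - 1) / (3 * (1 + 1 / k)) := by
    field_simp
    ring
  rw [hfrac, hfrac3]
  exact alpha_le_theta_beta_of_mem_Icc hx1 hx2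
end

section
/- Let θ = 17/(3·2^(1/3)) − 3·2^(1/3) and let β be a real number with 0 < β ≤ 1/(θ·(9θ − 6)). Then for every γ in [0, 1], the inequality (β·θ + γ/3)/√(β + γ) ≤ (β·θ + 1/3)/√(β + 1) holds; in particular, the function γ ↦ (β·θ + γ/3)/√(β + γ) on [0, 1] attains its maximum at one of the endpoints γ = 0 or γ = 1, and √β·θ ≤ (β·θ + 1/3)/√(β + 1). -/
/-!
Squaring, `(βθ + γ/3)/√(β + γ) ≤ (βθ + 1/3)/√(β + 1)` becomes a polynomial inequality whose
defect factors as `(1 - γ)/9 · (β(1 - βθ(9θ - 6)) + γ(β + 1))`. For `γ ∈ [0, 1]` both factors are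
nonnegative as soon as `βθ(9θ - 6) ≤ 1`, which is the hypothesis on `β` once `9θ - 6 > 0`,
i.e. once `2^(1/3) < 1.26`.
-/

open Real

lemma div_sqrt_le_div_sqrt_of_sq_mul_le_s13 {a b x y : ℝ} (hb : 0 ≤ b) (hx : 0 < x) (hy : 0 < y)
    (h : a ^ 2 * y ≤ b ^ 2 * x) : a / √x ≤ b / √y := by
  rw [div_le_div_iff₀ (sqrt_pos.2 hx) (sqrt_pos.2 hy)]
  refine (abs_le_of_sq_le_sq' ?_ (by positivity)).2
  rwa [mul_pow, mul_pow, sq_sqrt hy.le, sq_sqrt hx.le]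

lemma sq_mul_sub_sq_mul_eq (β θ γ : ℝ) :
    (β * θ + 1 / 3) ^ 2 * (β + γ) - (β * θ + γ / 3) ^ 2 * (β + 1) =
      (1 - γ) / 9 * (β * (1 - β * (θ * (9 * θ - 6))) + γ * (β + 1)) := by
  ring

lemma div_sqrt_le_div_sqrt_one {β θ γ : ℝ} (hθ : 0 ≤ θ) (hβ : 0 < β)
    (hβθ : β * (θ * (9 * θ - 6)) ≤ 1) (hγ : γ ∈ Set.Icc (0 : ℝ) 1) :
    (β * θ + γ / 3) / √(β + γ) ≤ (β * θ + 1 / 3) / √(β + 1) := by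
  obtain ⟨hγ₀, hγ₁⟩ := hγ
  refine div_sqrt_le_div_sqrt_of_sq_mul_le_s13 (by positivity) (by linarith) (by linarith) ?_
  have hgap := sq_mul_sub_sq_mul_eq β θ γ
  have hβterm : 0 ≤ β * (1 - β * (θ * (9 * θ - 6))) := mul_nonneg hβ.le (by linarith)
  have hγterm : 0 ≤ γ * (β + 1) := mul_nonneg hγ₀ (by linarith)
  have : 0 ≤ (1 - γ) / 9 * (β * (1 - β * (θ * (9 * θ - 6))) + γ * (β + 1)) :=
    mul_nonneg (by linarith) (by linarith)
  linarith

lemma two_rpow_one_third_lt : (2 : ℝ) ^ ((1 : ℝ) / 3) < 1.26 := by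
  refine lt_of_pow_lt_pow_left₀ 3 (by norm_num) ?_
  rw [← rpow_natCast, ← rpow_mul (by norm_num)]
  norm_num

lemma two_thirds_lt_theta :
    2 / 3 < 17 / (3 * (2 : ℝ) ^ ((1 : ℝ) / 3)) - 3 * (2 : ℝ) ^ ((1 : ℝ) / 3) := by
  have hc₀ : 0 < (2 : ℝ) ^ ((1 : ℝ) / 3) := by positivity
  have hc₁ := two_rpow_one_third_lt
  rw [lt_sub_iff_add_lt, lt_div_iff₀ (by positivity)]
  nlinarith

/-- Let `θ = 17/(3·2^(1/3)) − 3·2^(1/3)` and `0 < β ≤ 1/(θ(9θ − 6))`. Then for every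
`γ ∈ [0, 1]`, `(βθ + γ/3)/√(β + γ) ≤ (βθ + 1/3)/√(β + 1)`; in particular the
function attains its maximum on `[0, 1]` at one of the endpoints, and
`√β·θ ≤ (βθ + 1/3)/√(β + 1)`. -/
theorem gamma_endpoint_max (β : ℝ)
    (hβ₀ : 0 < β)
    (hβ₁ : β ≤ 1 / ((17 / (3 * (2 : ℝ) ^ ((1 : ℝ) / 3)) - 3 * (2 : ℝ) ^ ((1 : ℝ) / 3)) *
      (9 * (17 / (3 * (2 : ℝ) ^ ((1 : ℝ) / 3)) - 3 * (2 : ℝ) ^ ((1 : ℝ) / 3)) - 6))) :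
    (∀ γ ∈ Set.Icc (0 : ℝ) 1,
        (β * (17 / (3 * (2 : ℝ) ^ ((1 : ℝ) / 3)) - 3 * (2 : ℝ) ^ ((1 : ℝ) / 3)) + γ / 3) /
            Real.sqrt (β + γ) ≤
          (β * (17 / (3 * (2 : ℝ) ^ ((1 : ℝ) / 3)) - 3 * (2 : ℝ) ^ ((1 : ℝ) / 3)) + 1 / 3) /
            Real.sqrt (β + 1)) ∧
      (∀ γ ∈ Set.Icc (0 : ℝ) 1,
        (β * (17 / (3 * (2 : ℝ) ^ ((1 : ℝ) / 3)) - 3 * (2 : ℝ) ^ ((1 : ℝ) / 3)) + γ / 3) /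
            Real.sqrt (β + γ) ≤
          max
            ((β * (17 / (3 * (2 : ℝ) ^ ((1 : ℝ) / 3)) - 3 * (2 : ℝ) ^ ((1 : ℝ) / 3)) + 0 / 3) /
              Real.sqrt (β + 0))
            ((β * (17 / (3 * (2 : ℝ) ^ ((1 : ℝ) / 3)) - 3 * (2 : ℝ) ^ ((1 : ℝ) / 3)) + 1 / 3) /
              Real.sqrt (β + 1))) ∧
      Real.sqrt β * (17 / (3 * (2 : ℝ) ^ ((1 : ℝ) / 3)) - 3 * (2 : ℝ) ^ ((1 : ℝ) / 3)) ≤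
        (β * (17 / (3 * (2 : ℝ) ^ ((1 : ℝ) / 3)) - 3 * (2 : ℝ) ^ ((1 : ℝ) / 3)) + 1 / 3) /
          Real.sqrt (β + 1) := by
  have hθ := two_thirds_lt_theta
  set θ := 17 / (3 * (2 : ℝ) ^ ((1 : ℝ) / 3)) - 3 * (2 : ℝ) ^ ((1 : ℝ) / 3)
  have hβθ : β * (θ * (9 * θ - 6)) ≤ 1 :=
    (le_div_iff₀ (mul_pos (by linarith) (by linarith))).1 hβ₁
  have hmax : ∀ γ ∈ Set.Icc (0 : ℝ) 1,
      (β * θ + γ / 3) / √(β + γ) ≤ (β * θ + 1 / 3) / √(β + 1) :=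
    fun γ hγ => div_sqrt_le_div_sqrt_one (by linarith) hβ₀ hβθ hγ
  refine ⟨hmax, fun γ hγ => (hmax γ hγ).trans (le_max_right _ _), ?_⟩
  have hzero : (β * θ + 0 / 3) / √(β + 0) = √β * θ := by
    rw [zero_div, add_zero, add_zero, mul_div_right_comm, div_sqrt]
  exact hzero ▸ hmax 0 ⟨le_rfl, zero_le_one⟩
end

section
/- Let θ = 17/(3·2^(1/3)) − 3·2^(1/3). The function g(β) = (β·θ + 1/3)/√(β + 1) is nondecreasing on [0, ∞), and for β_2 = 1/(2^(2/3)·3^(1/3)) one has g(β) ≤ g(β_2) < 0.53968 for all β in [0, β_2]. -/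
/-! Writing `u = √(β + 1) ≥ 1`, one has `(βθ + c)/√(β + 1) = θu + (c - θ)/u`, and
`u ↦ θu + d/u` is nondecreasing on `[1, ∞)` as soon as `0 ≤ θ` and `d ≤ θ`. For `c = 1/3`
this only needs `θ ≥ 1/6`, and `θ ≈ 0.71787`; the bound by the value at `β₂` follows.
That value equals `((17 - 9·2^(2/3))/(6·3^(1/3)) + 1/3)/√(β₂ + 1)`, and ten-digit
enclosures of `2^(1/3)` and `3^(1/3)` show it is below `0.53968`. -/

open Real Set

lemma monotoneOn_mul_add_div {θ d : ℝ} (hθ : 0 ≤ θ) (hd : d ≤ θ) :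
    MonotoneOn (fun u : ℝ => θ * u + d / u) (Ici 1) := by
  intro u (hu : 1 ≤ u) v (hv : 1 ≤ v) huv
  have hd_le : d ≤ θ * (u * v) :=
    hd.trans (le_mul_of_one_le_right hθ (one_le_mul_of_one_le_of_one_le hu hv))
  have key : θ * v + d / v - (θ * u + d / u) = (v - u) * (θ * (u * v) - d) / (u * v) := by
    field_simp
    ring
  show θ * u + d / u ≤ θ * v + d / v
  rw [← sub_nonneg, key]
  exact div_nonneg (mul_nonneg (sub_nonneg.2 huv) (sub_nonneg.2 hd_le)) (by positivity)

lemma monotoneOn_mul_add_div_sqrt_add_one {θ c : ℝ} (hθ : 0 ≤ θ) (hc : c ≤ 2 * θ) :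
    MonotoneOn (fun β : ℝ => (β * θ + c) / √(β + 1)) (Ici 0) := by
  have hsplit : EqOn (fun β : ℝ => θ * √(β + 1) + (c - θ) / √(β + 1))
      (fun β : ℝ => (β * θ + c) / √(β + 1)) (Ici 0) := by
    intro β (hβ : 0 ≤ β)
    have hs : √(β + 1) ^ 2 = β + 1 := sq_sqrt (by linarith)
    have : 0 < √(β + 1) := sqrt_pos.2 (by linarith)
    field_simp
    linear_combination θ * hs
  refine MonotoneOn.congr ?_ hsplit
  refine (monotoneOn_mul_add_div (d := c - θ) hθ (by linarith)).comp ?_ ?_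
  · intro a _ b _ hab
    exact sqrt_le_sqrt (by linarith)
  · intro β (hβ : 0 ≤ β)
    exact one_le_sqrt.2 (by linarith)

lemma rpow_one_third_pow_three_s14 {a : ℝ} (ha : 0 ≤ a) : (a ^ ((1 : ℝ) / 3)) ^ 3 = a := by
  rw [one_div]
  exact_mod_cast rpow_inv_natCast_pow (n := 3) ha (by norm_num)

lemma rpow_two_thirds_s14 {a : ℝ} (ha : 0 ≤ a) :
    a ^ ((2 : ℝ) / 3) = (a ^ ((1 : ℝ) / 3)) ^ 2 := by
  rw [← rpow_mul_natCast ha]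
  norm_num

lemma lt_rpow_one_third {q a : ℝ} (ha : 0 ≤ a) (h : q ^ 3 < a) : q < a ^ ((1 : ℝ) / 3) :=
  lt_of_pow_lt_pow_left₀ 3 (rpow_nonneg ha _) (by rwa [rpow_one_third_pow_three_s14 ha])

lemma rpow_one_third_lt {q a : ℝ} (ha : 0 ≤ a) (hq : 0 ≤ q) (h : a < q ^ 3) :
    a ^ ((1 : ℝ) / 3) < q :=
  lt_of_pow_lt_pow_left₀ 3 hq (by rwa [rpow_one_third_pow_three_s14 ha])

lemma value_at_beta_two_lt {x y : ℝ} (hx3 : x ^ 3 = 2)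
    (hxlo : 1.2599210498 < x) (hxhi : x < 1.2599210499)
    (hylo : 1.4422495703 < y) (hyhi : y < 1.4422495704) :
    ((1 / (x ^ 2 * y)) * (17 / (3 * x) - 3 * x) + 1 / 3) / √(1 / (x ^ 2 * y) + 1)
      < 0.53968 := by
  have hx : 0 < x := by linarith
  have hy : 0 < y := by linarith
  have hnum : (1 / (x ^ 2 * y)) * (17 / (3 * x) - 3 * x) + 1 / 3
      = (17 - 9 * x ^ 2 + 2 * y) / (6 * y) := by
    field_simp
    linear_combination (27 * x ^ 2 - 51) * hx3
  have hnum_lt : (17 - 9 * x ^ 2 + 2 * y) / (6 * y) < 0.64689332 := by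
    rw [div_lt_iff₀ (by positivity)]
    nlinarith
  have hβ₂ : (0.4367902 : ℝ) ≤ 1 / (x ^ 2 * y) := by
    rw [le_div_iff₀ (by positivity)]
    nlinarith
  have hsqrt : (1.1986618 : ℝ) ≤ √(1 / (x ^ 2 * y) + 1) :=
    le_sqrt_of_sq_le (by linarith)
  rw [hnum]
  calc (17 - 9 * x ^ 2 + 2 * y) / (6 * y) / √(1 / (x ^ 2 * y) + 1)
      ≤ 0.64689332 / √(1 / (x ^ 2 * y) + 1) := by gcongr
    _ ≤ 0.64689332 / 1.1986618 := by gcongr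
    _ < 0.53968 := by norm_num

/-- With `θ = 17/(3·2^(1/3)) − 3·2^(1/3)`, the function
`g(β) = (βθ + 1/3)/√(β + 1)` is nondecreasing on `[0, ∞)`, and for
`β₂ = 1/(2^(2/3)·3^(1/3))`, `g(β) ≤ g(β₂) < 0.53968` for all `β ∈ [0, β₂]`. -/
theorem g_monotone_and_bound :
    MonotoneOn
        (fun β : ℝ =>
          (β * (17 / (3 * (2 : ℝ) ^ ((1 : ℝ) / 3)) - 3 * (2 : ℝ) ^ ((1 : ℝ) / 3)) + 1 / 3) /
            Real.sqrt (β + 1))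
        (Set.Ici 0) ∧
      (∀ β ∈ Set.Icc (0 : ℝ) (1 / ((2 : ℝ) ^ ((2 : ℝ) / 3) * (3 : ℝ) ^ ((1 : ℝ) / 3))),
        (β * (17 / (3 * (2 : ℝ) ^ ((1 : ℝ) / 3)) - 3 * (2 : ℝ) ^ ((1 : ℝ) / 3)) + 1 / 3) /
            Real.sqrt (β + 1) ≤
          ((1 / ((2 : ℝ) ^ ((2 : ℝ) / 3) * (3 : ℝ) ^ ((1 : ℝ) / 3))) *
              (17 / (3 * (2 : ℝ) ^ ((1 : ℝ) / 3)) - 3 * (2 : ℝ) ^ ((1 : ℝ) / 3)) + 1 / 3) /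
            Real.sqrt (1 / ((2 : ℝ) ^ ((2 : ℝ) / 3) * (3 : ℝ) ^ ((1 : ℝ) / 3)) + 1)) ∧
      ((1 / ((2 : ℝ) ^ ((2 : ℝ) / 3) * (3 : ℝ) ^ ((1 : ℝ) / 3))) *
          (17 / (3 * (2 : ℝ) ^ ((1 : ℝ) / 3)) - 3 * (2 : ℝ) ^ ((1 : ℝ) / 3)) + 1 / 3) /
        Real.sqrt (1 / ((2 : ℝ) ^ ((2 : ℝ) / 3) * (3 : ℝ) ^ ((1 : ℝ) / 3)) + 1) < 0.53968 := by
  rw [rpow_two_thirds_s14 zero_le_two]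
  set x : ℝ := (2 : ℝ) ^ ((1 : ℝ) / 3)
  have hxlo : 1.2599210498 < x := lt_rpow_one_third zero_le_two (by norm_num)
  have hxhi : x < 1.2599210499 := rpow_one_third_lt zero_le_two (by norm_num) (by norm_num)
  have hθ : 1 / 6 ≤ 17 / (3 * x) - 3 * x := by
    rw [le_sub_iff_add_le, le_div_iff₀ (by positivity)]
    nlinarith
  have hmono := monotoneOn_mul_add_div_sqrt_add_one (θ := 17 / (3 * x) - 3 * x) (c := 1 / 3)
    (by linarith) (by linarith)
  refine ⟨hmono, fun β hβ => hmono hβ.1 (mem_Ici.2 (by positivity)) hβ.2, ?_⟩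
  exact value_at_beta_two_lt (rpow_one_third_pow_three_s14 zero_le_two) hxlo hxhi
    (lt_rpow_one_third zero_le_three (by norm_num))
    (rpow_one_third_lt zero_le_three (by norm_num) (by norm_num))
end

section
/- The function ρ defined on real numbers m ≥ 2 by ρ(m) = (1 − 1/m)^m + (1 − 1/m)^(m−1) is non-increasing on [2, ∞); consequently ρ(m) ≤ ρ(2) = 3/4 for all real m ≥ 2. -/
/-!
With `b = 1 - 1/m` one has `ρ(m) = b^(m-1) (1 + b)`, and differentiating gives
`ρ'(m) = b^(m-1) (2/m + (2 - 1/m) log b)`. Since `-log b = log (1 + 1/(m-1))`, the bound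
`2x/(x+2) ≤ log (1 + x)` at `x = 1/(m-1)` reads `(2m - 1) log b ≤ -2`, so `ρ' ≤ 0` on `(1, ∞)`.
-/

open Real Set

noncomputable def rho (m : ℝ) : ℝ := (1 - 1 / m) ^ m + (1 - 1 / m) ^ (m - 1)

lemma one_sub_one_div_pos {m : ℝ} (hm : 1 < m) : 0 < 1 - 1 / m := by
  rw [sub_pos, div_lt_one (zero_lt_one.trans hm)]
  exact hm

lemma hasDerivAt_rho {m : ℝ} (hm : 1 < m) :
    HasDerivAt rho ((1 - 1 / m) ^ (m - 1) * (2 / m + (2 - 1 / m) * log (1 - 1 / m))) m := by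
  have hm0 : m ≠ 0 := (zero_lt_one.trans hm).ne'
  have hm1 : m - 1 ≠ 0 := sub_ne_zero.2 hm.ne'
  have hb := one_sub_one_div_pos hm
  have hbase : HasDerivAt (fun x : ℝ => 1 - 1 / x) (1 / m ^ 2) m := by
    simpa [one_div] using (hasDerivAt_inv hm0).const_sub 1
  refine ((hbase.rpow (hasDerivAt_id m) hb).add
    (hbase.rpow ((hasDerivAt_id m).sub_const 1) hb)).congr_deriv ?_
  have hpow : (1 - 1 / m) ^ m = (1 - 1 / m) ^ (m - 1) * (1 - 1 / m) := by
    rw [← rpow_add_one hb.ne', sub_add_cancel]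
  have hpow' : (1 - 1 / m) ^ (m - 1 - 1) = (1 - 1 / m) ^ (m - 1) / (1 - 1 / m) := by
    rw [rpow_sub hb, rpow_one]
  simp only [id, hpow, hpow']
  generalize (1 - 1 / m) ^ (m - 1) = P
  generalize log (1 - 1 / m) = L
  field_simp
  ring

lemma two_sub_one_div_mul_log_one_sub_one_div_le {m : ℝ} (hm : 1 < m) :
    (2 - 1 / m) * log (1 - 1 / m) ≤ -(2 / m) := by
  obtain ⟨a, ha, rfl⟩ : ∃ a, 0 < a ∧ m = a + 1 := ⟨m - 1, by linarith, by ring⟩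
  have key := le_log_one_add_of_nonneg (inv_nonneg.2 ha.le)
  rw [show 2 * a⁻¹ / (a⁻¹ + 2) = 2 / (2 * a + 1) by field_simp; ring,
    div_le_iff₀ (by positivity)] at key
  have hlog : log (1 - 1 / (a + 1)) = -log (1 + a⁻¹) := by
    rw [← log_inv]
    congr 1
    field_simp
    ring
  rw [hlog, show 2 - 1 / (a + 1) = (2 * a + 1) / (a + 1) by field_simp; ring, mul_neg,
    neg_le_neg_iff, div_mul_eq_mul_div, mul_comm]
  exact div_le_div_of_nonneg_right key (by positivity)

lemma rho_antitoneOn : AntitoneOn rho (Ioi 1) := by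
  refine antitoneOn_of_deriv_nonpos (convex_Ioi 1)
    (fun m hm => (hasDerivAt_rho hm).continuousAt.continuousWithinAt) ?_ ?_ <;>
    rw [interior_Ioi]
  · exact fun m hm => (hasDerivAt_rho hm).differentiableAt.differentiableWithinAt
  · intro m hm
    rw [(hasDerivAt_rho hm).deriv]
    exact mul_nonpos_of_nonneg_of_nonpos (rpow_nonneg (one_sub_one_div_pos hm).le _)
      (by linarith [two_sub_one_div_mul_log_one_sub_one_div_le hm])

lemma rho_two : rho 2 = 3 / 4 := by
  norm_num [rho]

/-- The function `ρ(m) = (1 − 1/m)^m + (1 − 1/m)^(m−1)` (real powers) is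
non-increasing on `[2, ∞)`; consequently `ρ(m) ≤ ρ(2) = 3/4` for all real `m ≥ 2`. -/
theorem rho_antitone_and_bound :
    AntitoneOn (fun m : ℝ => (1 - 1 / m) ^ m + (1 - 1 / m) ^ (m - 1)) (Set.Ici 2) ∧
      (∀ m : ℝ, 2 ≤ m → (1 - 1 / m) ^ m + (1 - 1 / m) ^ (m - 1) ≤ 3 / 4) ∧
      (1 - 1 / (2 : ℝ)) ^ (2 : ℝ) + (1 - 1 / (2 : ℝ)) ^ ((2 : ℝ) - 1) = 3 / 4 := by
  have hanti : AntitoneOn rho (Ici 2) := rho_antitoneOn.mono (Ici_subset_Ioi.2 one_lt_two)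
  exact ⟨hanti, fun m hm => rho_two ▸ hanti self_mem_Ici hm hm, rho_two⟩
end
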